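/- arXiv:1806.00596 — 10 statements merged into one kernel-verified Lean document; each statement's English description precedes it below -/
import Mathlib

section
/- If m ≥ 2 is an integer and x ≥ 0, y are real numbers such that |y|/x ≤ 2^{1/(m-1)} - 1 and x + y ≥ 0, then x^m - 2m x^{m-1}|y| ≤ (x+y)^m ≤ x^m + 2m x^{m-1}|y|. -/
/-!
Since `c = 2 ^ (1 / (m - 1))` satisfies `c ^ (m - 1) = 2`, the hypothesis `x + |y| ≤ c x` gives
`(x + |y|) ^ (m - 1) ≤ 2 x ^ (m - 1)`. The mean value bound
`|(x + y) ^ m - x ^ m| ≤ m |y| max(|x + y|, x) ^ (m - 1) ≤ m |y| (x + |y|) ^ (m - 1)`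
then yields both inequalities at once.
-/

lemma add_pow_le_two_mul_pow {n : ℕ} (hn : n ≠ 0) {x t : ℝ} (hx : 0 ≤ x) (ht : 0 ≤ t)
    (h : t ≤ x * (2 ^ (n⁻¹ : ℝ) - 1)) : (x + t) ^ n ≤ 2 * x ^ n :=
  calc (x + t) ^ n ≤ (x * 2 ^ (n⁻¹ : ℝ)) ^ n := pow_le_pow_left₀ (by positivity) (by linarith) n
    _ = 2 * x ^ n := by rw [mul_pow, Real.rpow_inv_natCast_pow zero_le_two hn, mul_comm]

lemma abs_add_pow_sub_pow_le {x : ℝ} (hx : 0 ≤ x) (y : ℝ) (n : ℕ) :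
    |(x + y) ^ n - x ^ n| ≤ n * (x + |y|) ^ (n - 1) * |y| := by
  have hmax : max |x + y| |x| ≤ x + |y| :=
    max_le ((abs_add_le x y).trans_eq (by rw [abs_of_nonneg hx]))
      ((abs_of_nonneg hx).trans_le (le_add_of_nonneg_right (abs_nonneg y)))
  calc |(x + y) ^ n - x ^ n| ≤ |x + y - x| * n * max |x + y| |x| ^ (n - 1) :=
        abs_pow_sub_pow_le _ _ _
    _ ≤ |y| * n * (x + |y|) ^ (n - 1) := by
        rw [add_sub_cancel_left]
        gcongr
    _ = n * (x + |y|) ^ (n - 1) * |y| := by ring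

theorem pow_add_bounds_general (m : ℕ) (hm : 2 ≤ m) (x y : ℝ) (hx : 0 < x)
    (h : |y| ≤ x * (2 ^ ((1 : ℝ) / ((m : ℝ) - 1)) - 1)) :
    x ^ m - 2 * m * x ^ (m - 1) * |y| ≤ (x + y) ^ m ∧
      (x + y) ^ m ≤ x ^ m + 2 * m * x ^ (m - 1) * |y| := by
  have hexp : (1 : ℝ) / ((m : ℝ) - 1) = ((m - 1 : ℕ) : ℝ)⁻¹ := by
    rw [Nat.cast_sub (by omega), Nat.cast_one, one_div]
  rw [hexp] at h
  have hpow : (x + |y|) ^ (m - 1) ≤ 2 * x ^ (m - 1) :=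
    add_pow_le_two_mul_pow (by omega) hx.le (abs_nonneg y) h
  have hdiff : |(x + y) ^ m - x ^ m| ≤ 2 * m * x ^ (m - 1) * |y| :=
    calc |(x + y) ^ m - x ^ m| ≤ m * (x + |y|) ^ (m - 1) * |y| := abs_add_pow_sub_pow_le hx.le y m
      _ ≤ m * (2 * x ^ (m - 1)) * |y| := by gcongr
      _ = 2 * m * x ^ (m - 1) * |y| := by ring
  constructor <;> linarith [abs_sub_le_iff.mp hdiff]

/-- If `m ≥ 2` and `x > 0`, `y` real with `|y|/x ≤ 2^(1/(m-1)) - 1` and `x + y ≥ 0`, then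
`x^m - 2m x^(m-1) |y| ≤ (x+y)^m ≤ x^m + 2m x^(m-1) |y|`. -/
theorem pow_add_bounds (m : ℕ) (hm : 2 ≤ m) (x y : ℝ) (hx : 0 < x) (hxy : 0 ≤ x + y)
    (h : |y| ≤ x * (2 ^ ((1 : ℝ) / ((m : ℝ) - 1)) - 1)) :
    x ^ m - 2 * m * x ^ (m - 1) * |y| ≤ (x + y) ^ m ∧
      (x + y) ^ m ≤ x ^ m + 2 * m * x ^ (m - 1) * |y| :=
  pow_add_bounds_general m hm x y hx h
end

section
/- Let k, l, n be positive integers, T > 0, and M an l×k integer matrix with entries of absolute value at most n^T. If p is a prime larger than e^{(k log k)/2 + kT log n}, then the kernel of M : ℤ^k → ℤ^l surjects onto the kernel of the reduced map M : (ℤ/pℤ)^k → (ℤ/pℤ)^l under reduction mod p. -/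
/-!
A nonzero minor of `M` of size `r = rank_ℚ M` is an integer of absolute value at most
`(√r · n^T)^r < p` by Hadamard's inequality, so it survives reduction mod `p` and the rank of
`M` does not drop mod `p`. The integer kernel `K` of `M` is saturated (`p • u ∈ K → u ∈ K`), so
a `ℤ`-basis of `K` stays linearly independent mod `p`; by rank–nullity its `k - r` reductions
then span the kernel mod `p`.
-/

open Matrix Module

namespace Matrix

theorem abs_det_le_prod_norm_row {r : ℕ} (A : Matrix (Fin r) (Fin r) ℝ) :
    |A.det| ≤ ∏ i, ‖WithLp.toLp 2 (A i)‖ := by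
  have : Fact (finrank ℝ (EuclideanSpace ℝ (Fin r)) = r) := ⟨finrank_euclideanSpace_fin⟩
  let b := EuclideanSpace.basisFun (Fin r) ℝ
  have hdet : A.det = b.toBasis.det fun i => WithLp.toLp 2 (A i) := by
    rw [Basis.det_apply, ← det_transpose]
    rfl
  rw [hdet, ← b.toBasis.orientation.volumeForm_robust' b]
  exact b.toBasis.orientation.abs_volumeForm_apply_le _

theorem abs_det_le_sqrt_card_mul_pow {r : ℕ} (A : Matrix (Fin r) (Fin r) ℝ) {x : ℝ}
    (hx : 0 ≤ x) (hA : ∀ i j, |A i j| ≤ x) : |A.det| ≤ (√r * x) ^ r := by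
  have hrow : ∀ i, ‖WithLp.toLp 2 (A i)‖ ≤ √r * x := fun i => by
    rw [EuclideanSpace.norm_eq, ← Real.sqrt_sq hx, ← Real.sqrt_mul (Nat.cast_nonneg r)]
    gcongr
    calc ∑ j, ‖A i j‖ ^ 2 ≤ ∑ _j : Fin r, x ^ 2 := by
          gcongr with j
          exact (Real.norm_eq_abs _).trans_le (hA i j)
      _ = r * x ^ 2 := by simp
  calc |A.det| ≤ ∏ i, ‖WithLp.toLp 2 (A i)‖ := A.abs_det_le_prod_norm_row
    _ ≤ ∏ _i : Fin r, √r * x :=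
      Finset.prod_le_prod (fun _ _ => norm_nonneg _) fun i _ => hrow i
    _ = (√r * x) ^ r := by simp

variable {m n : Type*} [Fintype n]

theorem exists_linearIndependent_cols {K : Type*} [Field K] (A : Matrix m n K) :
    ∃ t : Fin A.rank → n, LinearIndependent K (A.col ∘ t) := by
  obtain ⟨κ, a, ha, hspan, hli⟩ := exists_linearIndependent' K A.col
  have : Fintype κ := have := Finite.of_injective a ha; Fintype.ofFinite κ
  have hcard : Fintype.card κ = A.rank := by
    rw [rank_eq_finrank_span_cols, ← hspan, finrank_span_eq_card hli]
  let e : Fin A.rank ≃ κ := (Fintype.equivFinOfCardEq hcard).symm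
  exact ⟨a ∘ e, hli.comp e e.injective⟩

theorem exists_submatrix_det_ne_zero [Fintype m] {K : Type*} [Field K] (A : Matrix m n K) :
    ∃ (s : Fin A.rank → m) (t : Fin A.rank → n), (A.submatrix s t).det ≠ 0 := by
  obtain ⟨t, ht⟩ := A.exists_linearIndependent_cols
  set B := A.submatrix id t
  have hB : Bᵀ.rank = A.rank := by
    rw [LinearIndependent.rank_matrix (M := Bᵀ) ht, Fintype.card_fin]
  obtain ⟨s, hs⟩ := Bᵀ.exists_linearIndependent_cols
  have hrows : LinearIndependent K (A.submatrix (s ∘ Fin.cast hB.symm) t).row :=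
    hs.comp _ (Fin.cast_injective _)
  exact ⟨_, t,
    ((isUnit_iff_isUnit_det _).1 (linearIndependent_rows_iff_isUnit.1 hrows)).ne_zero⟩

theorem rank_add_finrank_ker_mulVecLin {R : Type*} [CommRing R] [IsDomain R]
    (A : Matrix m n R) : A.rank + finrank R (LinearMap.ker A.mulVecLin) = Fintype.card n := by
  rw [rank, ← (LinearMap.quotKerEquivRange _).finrank_eq, Submodule.finrank_quotient_add_finrank,
    finrank_fintype_fun_eq_card]

theorem rank_le_rank_map_algebraMap {R K : Type*} [CommRing R] [IsDomain R]
    [IsPrincipalIdealRing R] [Field K] [Algebra R K] [IsFractionRing R K] (A : Matrix m n R) :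
    A.rank ≤ (A.map (algebraMap R K)).rank := by
  set V := LinearMap.range A.mulVecLin
  let b := finBasis R V
  let ι : (m → R) →ₗ[R] (m → K) := (Algebra.linearMap R K).compLeft m
  have hι : LinearMap.ker ι = ⊥ := LinearMap.ker_eq_bot.2 fun x y h => funext fun i =>
    IsFractionRing.injective R K (congrFun h i)
  have hli : LinearIndependent K (ι ∘ V.subtype ∘ b) :=
    (LinearIndependent.iff_fractionRing R K).1
      ((b.linearIndependent.map' V.subtype V.ker_subtype).map' ι hι)
  have hle : Submodule.span K (Set.range (ι ∘ V.subtype ∘ b)) ≤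
      LinearMap.range (A.map (algebraMap R K)).mulVecLin := by
    rw [Submodule.span_le]
    rintro _ ⟨i, rfl⟩
    obtain ⟨x, hx⟩ := (b i).2
    refine ⟨algebraMap R K ∘ x, funext fun j => ?_⟩
    simp [ι, ← hx, RingHom.map_mulVec]
  calc A.rank = finrank K (Submodule.span K (Set.range (ι ∘ V.subtype ∘ b))) := by
        rw [finrank_span_eq_card hli, Fintype.card_fin, rank]
    _ ≤ _ := Submodule.finrank_mono hle

end Matrix

theorem Real.sqrt_mul_pow_le_sqrt_mul_pow {r k : ℕ} {x : ℝ} (hx : 1 ≤ x) (hrk : r ≤ k) :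
    (√r * x) ^ r ≤ (√k * x) ^ k := by
  rcases k.eq_zero_or_pos with rfl | hk
  · simp [Nat.le_zero.1 hrk]
  have hkx : 1 ≤ √k * x :=
    one_le_mul_of_one_le_of_one_le (Real.one_le_sqrt.2 (by exact_mod_cast hk)) hx
  calc (√r * x) ^ r ≤ (√k * x) ^ r := by gcongr
    _ ≤ (√k * x) ^ k := pow_le_pow_right₀ hkx hrk

theorem Real.exp_mul_log_add_eq_sqrt_mul_rpow_pow (k : ℕ) {n : ℕ} (hn : 0 < n) (T : ℝ) :
    Real.exp (k * Real.log k / 2 + k * T * Real.log n) = (√k * (n : ℝ) ^ T) ^ k := by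
  rcases k.eq_zero_or_pos with rfl | hk
  · simp
  rw [← Real.exp_log (by positivity : 0 < √k * (n : ℝ) ^ T), ← Real.exp_nat_mul,
    Real.log_mul (by positivity) (by positivity), Real.log_sqrt (by positivity),
    Real.log_rpow (by exact_mod_cast hn)]
  ring_nf

theorem Matrix.rank_map_rat_le_rank_map_zmod {m n : Type*} [Fintype m] [Fintype n]
    {p : ℕ} [Fact p.Prime] (M : Matrix m n ℤ) {x : ℝ} (hx : 1 ≤ x)
    (hM : ∀ i j, |(M i j : ℝ)| ≤ x) (hp : (√(Fintype.card n) * x) ^ Fintype.card n < p) :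
    (M.map (Int.cast : ℤ → ℚ)).rank ≤ (M.map (Int.cast : ℤ → ZMod p)).rank := by
  set Q := M.map (Int.cast : ℤ → ℚ)
  obtain ⟨s, t, hst⟩ := Q.exists_submatrix_det_ne_zero
  set Z := M.submatrix s t
  rw [submatrix_map, ← Int.cast_det, Int.cast_ne_zero] at hst
  have hZ : |(Z.det : ℝ)| < p := calc
    |(Z.det : ℝ)| ≤ (√Q.rank * x) ^ Q.rank := by
      rw [Int.cast_det]
      exact abs_det_le_sqrt_card_mul_pow _ (by linarith) fun i j => hM (s i) (t j)
    _ ≤ (√(Fintype.card n) * x) ^ Fintype.card n :=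
      Real.sqrt_mul_pow_le_sqrt_mul_pow hx (rank_le_card_width _)
    _ < p := hp
  have hZp : (Z.det : ZMod p) ≠ 0 := fun h => hst <| Int.eq_zero_of_abs_lt_dvd
    ((ZMod.intCast_zmod_eq_zero_iff_dvd _ _).1 h) (by exact_mod_cast hZ)
  calc Q.rank = ((M.map (Int.cast : ℤ → ZMod p)).submatrix s t).rank := by
        rw [rank_of_det_ne_zero (by rwa [submatrix_map, ← Int.cast_det]), Fintype.card_fin]
    _ ≤ _ := rank_submatrix_le _ _ _

namespace ZMod

def reducePi (p : ℕ) (ι : Type*) : (ι → ℤ) →ₗ[ℤ] (ι → ZMod p) :=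
  (Int.castAddHom (ZMod p)).toIntLinearMap.compLeft ι

@[simp]
theorem reducePi_apply (p : ℕ) {ι : Type*} (u : ι → ℤ) :
    reducePi p ι u = fun i => (u i : ZMod p) := rfl

theorem reducePi_sum_val_smul {p : ℕ} [NeZero p] {ι κ : Type*} [Fintype ι]
    (c : ι → ZMod p) (w : ι → κ → ℤ) :
    reducePi p κ (∑ i, ((c i).val : ℤ) • w i) = ∑ i, c i • reducePi p κ (w i) := by
  simp only [map_sum, map_zsmul, ← Int.cast_smul_eq_zsmul (ZMod p), Int.cast_natCast,
    natCast_zmod_val]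

theorem exists_eq_smul_of_reducePi_eq_zero {p : ℕ} {κ : Type*} {u : κ → ℤ}
    (hu : reducePi p κ u = 0) : ∃ u' : κ → ℤ, u = (p : ℤ) • u' := by
  choose u' hu' using fun j => (intCast_zmod_eq_zero_iff_dvd (u j) p).1 (congrFun hu j)
  exact ⟨u', funext hu'⟩

theorem linearIndependent_reducePi_of_smul_mem {p : ℕ} [NeZero p] {ι κ : Type*} [Fintype ι]
    {S : Submodule ℤ (κ → ℤ)} (b : Basis ι ℤ S)
    (hS : ∀ u, (p : ℤ) • u ∈ S → u ∈ S) :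
    LinearIndependent (ZMod p) (fun i => reducePi p κ (b i)) := by
  rw [Fintype.linearIndependent_iff]
  intro c hc i
  obtain ⟨u, hu⟩ := exists_eq_smul_of_reducePi_eq_zero ((reducePi_sum_val_smul c _).trans hc)
  have huS : u ∈ S := hS u (hu ▸ S.sum_mem fun i _ => S.smul_mem _ (b i).2)
  have hsum : ∑ i, ((c i).val : ℤ) • b i = (p : ℤ) • ⟨u, huS⟩ :=
    Subtype.ext (by simpa using hu)
  have hci := congrArg (fun x => b.repr x i) hsum
  simp only [b.repr_sum_self, map_zsmul, Finsupp.smul_apply, smul_eq_mul] at hci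
  rw [← natCast_zmod_val (c i), ← Int.cast_natCast, hci, Int.cast_mul, Int.cast_natCast,
    natCast_self, zero_mul]

end ZMod

open ZMod in
theorem Matrix.exists_mulVec_eq_zero_lift_of_rank_le {m n : Type*} [Fintype n]
    {p : ℕ} [Fact p.Prime] (M : Matrix m n ℤ)
    (hrank : (M.map (Int.cast : ℤ → ℚ)).rank ≤ (M.map (Int.cast : ℤ → ZMod p)).rank)
    (v : n → ZMod p) (hv : M.map (Int.cast : ℤ → ZMod p) *ᵥ v = 0) :
    ∃ w : n → ℤ, M *ᵥ w = 0 ∧ reducePi p n w = v := by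
  set K := LinearMap.ker M.mulVecLin
  obtain ⟨r, b⟩ := Submodule.basisOfPid (Pi.basisFun ℤ n) K
  set Mp := M.map (Int.cast : ℤ → ZMod p)
  have hp : (p : ℤ) ≠ 0 := by exact_mod_cast (Fact.out : p.Prime).ne_zero
  have hsat : ∀ u, (p : ℤ) • u ∈ K → u ∈ K := by
    intro u hu
    simpa only [K, LinearMap.mem_ker, mulVecLin_apply, mulVec_smul, smul_eq_zero, hp,
      false_or] using hu
  have hreduce : ∀ u ∈ K, reducePi p n u ∈ LinearMap.ker Mp.mulVecLin := by
    intro u hu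
    simp only [K, LinearMap.mem_ker, mulVecLin_apply] at hu ⊢
    funext i
    simpa [Mp, mulVec, dotProduct] using congrArg (fun x => (x i : ZMod p)) hu
  have hli := linearIndependent_reducePi_of_smul_mem b hsat
  have hspan : Submodule.span (ZMod p) (Set.range fun i => reducePi p n (b i)) =
      LinearMap.ker Mp.mulVecLin := by
    refine Submodule.eq_of_le_of_finrank_le
      (Submodule.span_le.2 (Set.range_subset_iff.2 fun i => hreduce _ (b i).2)) ?_
    have hnullZ := M.rank_add_finrank_ker_mulVecLin
    have hnullp := Mp.rank_add_finrank_ker_mulVecLin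
    have hQ : M.rank ≤ (M.map (Int.cast : ℤ → ℚ)).rank := M.rank_le_rank_map_algebraMap
    rw [finrank_eq_card_basis b, Fintype.card_fin] at hnullZ
    rw [finrank_span_eq_card hli, Fintype.card_fin]
    omega
  have hv' : v ∈ LinearMap.ker Mp.mulVecLin := hv
  obtain ⟨c, rfl⟩ := (Submodule.mem_span_range_iff_exists_fun _).1 (hspan ▸ hv')
  exact ⟨∑ i, ((c i).val : ℤ) • (b i : n → ℤ),
    K.sum_mem fun i _ => K.smul_mem _ (b i).2, reducePi_sum_val_smul c _⟩

theorem kernel_surjects_mod_large_prime_general {k l n : ℕ} (hn : 0 < n)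
    (T : ℝ) (hT : 0 < T) (M : Matrix (Fin l) (Fin k) ℤ)
    (hM : ∀ i j, (|M i j| : ℝ) ≤ (n : ℝ) ^ T)
    (p : ℕ) [Fact p.Prime]
    (hp : Real.exp ((k * Real.log k) / 2 + k * T * Real.log n) < p) :
    ∀ v : Fin k → ZMod p, (M.map (Int.cast : ℤ → ZMod p)).mulVec v = 0 →
      ∃ w : Fin k → ℤ, M.mulVec w = 0 ∧ (fun i => ((w i : ZMod p))) = v := by
  intro v hv
  have hx : 1 ≤ (n : ℝ) ^ T := Real.one_le_rpow (by exact_mod_cast hn) hT.le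
  rw [Real.exp_mul_log_add_eq_sqrt_mul_rpow_pow k hn, ← Fintype.card_fin k] at hp
  exact M.exists_mulVec_eq_zero_lift_of_rank_le (M.rank_map_rat_le_rank_map_zmod hx hM hp) v hv

/-- For an `l × k` integer matrix `M` with entries bounded by `n^T` in absolute value, and a
prime `p > exp((k log k)/2 + kT log n)`, the kernel of `M : ℤ^k → ℤ^l` surjects onto the
kernel of the reduction `M : (ℤ/pℤ)^k → (ℤ/pℤ)^l`. -/
theorem kernel_surjects_mod_large_prime {k l n : ℕ} (hk : 0 < k) (hl : 0 < l) (hn : 0 < n)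
    (T : ℝ) (hT : 0 < T) (M : Matrix (Fin l) (Fin k) ℤ)
    (hM : ∀ i j, (|M i j| : ℝ) ≤ (n : ℝ) ^ T)
    (p : ℕ) [Fact p.Prime]
    (hp : Real.exp ((k * Real.log k) / 2 + k * T * Real.log n) < p) :
    ∀ v : Fin k → ZMod p, (M.map (Int.cast : ℤ → ZMod p)).mulVec v = 0 →
      ∃ w : Fin k → ℤ, M.mulVec w = 0 ∧ (fun i => ((w i : ZMod p))) = v :=
  kernel_surjects_mod_large_prime_general hn T hT M hM p hp
end

section
/- Let w and w' be sequences of random variables with w_0 = w'_0 = 0, each taking countably many values, such that for each i ≥ 0, P(w'_{i+1}=a | w'_i=b) = P(w_{i+1}=a | w_i=b) + δ(i,b,a) whenever P(w'_i=b) = P(w_i=b) ≠ 0. Then for any n ≥ 0 and any set A of values, |P(w_n ∈ A) - P(w'_n ∈ A)| ≤ (1/2) Σ_{i=0}^{n-1} Σ_b Σ_c |δ(i,b,c)| P(w_i = b) ≤ (1/2) Σ_{i=0}^{n-1} max_b Σ_c |δ(i,b,c)|. -/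
/-!
Let `d_i = ∑_b |P(w_i = b) - P(w'_i = b)|` be the `ℓ¹` distance between the laws at time `i`, and
`D_i(b)` the `ℓ¹` distance between the two transition laws out of `b`. Splitting
`P(w_{i+1} = c)` along the value `b` of `w_i`, the two fibres over `b` differ by at most
`|P(w_i = b) - P(w'_i = b)|` in total mass and by `D_i(b) P(w_i = b)` in shape, so
`d_{i+1} ≤ d_i + ∑_b D_i(b) P(w_i = b)`. As `d_0 = 0` and any event `A` sees at most half of
`d_n`, the first bound follows; the second is `∑_b D_i(b) P(w_i = b) ≤ sup_b D_i(b)`. Finally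
`δ i b c = 0` whenever both chains avoid `c` at time `i + 1`, so `D_i(b)` is the sum appearing in
the statement.
-/

open MeasureTheory ProbabilityTheory
open scoped Classical

section RealSeries

variable {β γ : Type*}

theorem abs_tsum_le_tsum_abs (f : β → ℝ) : |∑' b, f b| ≤ ∑' b, |f b| := by
  by_cases hf : Summable f
  · simpa only [Real.norm_eq_abs] using norm_tsum_le_tsum_norm hf.norm
  · rw [tsum_eq_zero_of_not_summable hf, abs_zero]
    exact tsum_nonneg fun _ => abs_nonneg _

theorem abs_tsum_indicator_le_half_tsum_abs {f : β → ℝ} (hf : Summable f) (hf0 : ∑' b, f b = 0)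
    (A : Set β) : |∑' b, A.indicator f b| ≤ 1 / 2 * ∑' b, |f b| := by
  have habs (s : Set β) : |∑' b, s.indicator f b| ≤ ∑' b, s.indicator (fun b => |f b|) b := by
    simpa only [← Real.norm_eq_abs, norm_indicator_eq_indicator_norm] using
      abs_tsum_le_tsum_abs (s.indicator f)
  have hcompl : ∑' b, Aᶜ.indicator f b = -∑' b, A.indicator f b := by
    rw [eq_neg_iff_add_eq_zero, add_comm, ← (hf.indicator A).tsum_add (hf.indicator Aᶜ)]
    simpa only [Set.indicator_self_add_compl_apply] using hf0
  have hsplit : ∑' b, A.indicator (fun b => |f b|) b + ∑' b, Aᶜ.indicator (fun b => |f b|) b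
      = ∑' b, |f b| := by
    rw [← (hf.abs.indicator A).tsum_add (hf.abs.indicator Aᶜ)]
    simp only [Set.indicator_self_add_compl_apply]
  have := habs Aᶜ
  rw [hcompl, abs_neg] at this
  linarith [habs A]

theorem tsum_abs_tsum_le_tsum_tsum_abs {F : β → γ → ℝ} (hF : Summable (Function.uncurry F)) :
    ∑' c, |∑' b, F b c| ≤ ∑' b, ∑' c, |F b c| := by
  have hF' : Summable (Function.uncurry fun b c => |F b c|) := hF.abs
  calc ∑' c, |∑' b, F b c| ≤ ∑' c, ∑' b, |F b c| :=
        Summable.tsum_le_tsum (fun c => abs_tsum_le_tsum_abs _)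
          (hF'.prod_symm.prod.of_nonneg_of_le (fun _ => abs_nonneg _)
            fun c => abs_tsum_le_tsum_abs _) hF'.prod_symm.prod
    _ = ∑' b, ∑' c, |F b c| := hF'.tsum_comm

theorem tsum_abs_div_tsum_sub_div_tsum_le_two {u v : γ → ℝ} (hu0 : ∀ c, 0 ≤ u c)
    (hv0 : ∀ c, 0 ≤ v c) (hu : Summable u) (hv : Summable v) :
    ∑' c, |v c / ∑' c, v c - u c / ∑' c, u c| ≤ 2 := by
  have hs : 0 ≤ ∑' c, u c := tsum_nonneg hu0
  have ht : 0 ≤ ∑' c, v c := tsum_nonneg hv0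
  calc ∑' c, |v c / ∑' c, v c - u c / ∑' c, u c|
      ≤ ∑' c, (v c / ∑' c, v c + u c / ∑' c, u c) :=
        Summable.tsum_le_tsum (fun c => abs_sub_le_iff.2
            ⟨by linarith [div_nonneg (hu0 c) hs], by linarith [div_nonneg (hv0 c) ht]⟩)
          ((hv.div_const _).sub (hu.div_const _)).abs ((hv.div_const _).add (hu.div_const _))
    _ = (∑' c, v c) / ∑' c, v c + (∑' c, u c) / ∑' c, u c := by
        rw [(hv.div_const _).tsum_add (hu.div_const _), tsum_div_const, tsum_div_const]
    _ ≤ 1 + 1 := add_le_add (div_self_le_one _) (div_self_le_one _)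
    _ = 2 := one_add_one_eq_two

theorem tsum_abs_sub_eq_of_tsum_eq_zero {u v : γ → ℝ} (hu0 : ∀ c, 0 ≤ u c) (hv0 : ∀ c, 0 ≤ v c)
    (hu : Summable u) (h : ∑' c, u c = 0) :
    ∑' c, |u c - v c| = |∑' c, u c - ∑' c, v c| := by
  obtain rfl : u = 0 := (hasSum_zero_iff_of_nonneg hu0).1 (h ▸ hu.hasSum)
  simp only [Pi.zero_apply, zero_sub, abs_neg, tsum_zero, abs_of_nonneg (hv0 _),
    abs_of_nonneg (tsum_nonneg hv0)]

theorem tsum_abs_sub_le_abs_tsum_sub_add {u v : γ → ℝ} (hu0 : ∀ c, 0 ≤ u c)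
    (hv0 : ∀ c, 0 ≤ v c) (hu : Summable u) (hv : Summable v) :
    ∑' c, |u c - v c| ≤ |∑' c, u c - ∑' c, v c| +
      (if ∑' c, u c ≠ 0 ∧ ∑' c, v c ≠ 0 then ∑' c, |v c / ∑' c, v c - u c / ∑' c, u c| else 0)
        * ∑' c, u c := by
  set s := ∑' c, u c
  set t := ∑' c, v c
  by_cases hst : s ≠ 0 ∧ t ≠ 0
  · rw [if_pos hst, ← tsum_mul_right]
    have hsum : Summable fun c => |v c / t - u c / s| * s :=
      ((hv.div_const _).sub (hu.div_const _)).abs.mul_right s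
    have hpoint (c : γ) : |u c - v c| ≤ v c / t * |s - t| + |v c / t - u c / s| * s :=
      calc |u c - v c| = |v c / t * (s - t) - (v c / t - u c / s) * s| := by
            congr 1; field_simp [hst.1, hst.2]; ring
        _ ≤ |v c / t * (s - t)| + |(v c / t - u c / s) * s| := abs_sub _ _
        _ = v c / t * |s - t| + |v c / t - u c / s| * s := by
            rw [abs_mul, abs_mul, abs_of_nonneg (div_nonneg (hv0 c) (tsum_nonneg hv0)),
              abs_of_nonneg (tsum_nonneg hu0)]
    calc ∑' c, |u c - v c| ≤ ∑' c, (v c / t * |s - t| + |v c / t - u c / s| * s) :=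
          Summable.tsum_le_tsum hpoint (hu.sub hv).abs (((hv.div_const t).mul_right _).add hsum)
      _ = |s - t| + ∑' c, |v c / t - u c / s| * s := by
          rw [((hv.div_const t).mul_right _).tsum_add hsum, tsum_mul_right, tsum_div_const,
            div_self hst.2, one_mul]
  · rw [if_neg hst, zero_mul, add_zero]
    rcases not_and_or.1 hst with hs | ht
    · exact (tsum_abs_sub_eq_of_tsum_eq_zero hu0 hv0 hu (not_not.1 hs)).le
    · simpa only [abs_sub_comm] using
        (tsum_abs_sub_eq_of_tsum_eq_zero hv0 hu0 hv (not_not.1 ht)).le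

theorem tsum_mul_le_ciSup {E p : β → ℝ} (hE0 : ∀ b, 0 ≤ E b) (hE : BddAbove (Set.range E))
    (hp0 : ∀ b, 0 ≤ p b) (hp : HasSum p 1) : ∑' b, E b * p b ≤ ⨆ b, E b := by
  have hle (b : β) : E b * p b ≤ (⨆ b, E b) * p b :=
    mul_le_mul_of_nonneg_right (le_ciSup hE b) (hp0 b)
  have hsum : Summable fun b => (⨆ b, E b) * p b := hp.summable.mul_left _
  calc ∑' b, E b * p b ≤ ∑' b, (⨆ b, E b) * p b :=
        Summable.tsum_le_tsum hle (hsum.of_nonneg_of_le (fun b => mul_nonneg (hE0 b) (hp0 b)) hle)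
          hsum
    _ = ⨆ b, E b := by rw [tsum_mul_left, hp.tsum_eq, mul_one]

end RealSeries

section Distributions

variable {Ω S : Type*} [MeasurableSpace Ω] [Countable S] [MeasurableSpace S]
  [MeasurableSingletonClass S] {μ : Measure Ω} [IsFiniteMeasure μ] {X Y X' Y' : Ω → S}

theorem hasSum_measureReal_eq_and_mem (hX : Measurable X) (s : Set Ω) :
    HasSum (fun b => μ.real {ω | X ω = b ∧ ω ∈ s}) (μ.real s) := by
  have hfib (b : S) : MeasurableSet (X ⁻¹' {b}) := hX (measurableSet_singleton b)
  have htsum : ∑' b, μ.restrict s (X ⁻¹' {b}) = μ.restrict s Set.univ := by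
    rw [← measure_iUnion (pairwise_disjoint_fiber X) hfib, ← Set.preimage_iUnion,
      Set.iUnion_of_singleton, Set.preimage_univ]
  have h := ENNReal.hasSum_toReal (htsum ▸ measure_ne_top _ _)
  rw [← ENNReal.tsum_toReal_eq (fun _ => measure_ne_top _ _), htsum] at h
  simp only [← measureReal_def, measureReal_restrict_apply (hfib _),
    measureReal_restrict_apply_univ] at h
  exact h

theorem hasSum_measureReal_eq (hX : Measurable X) :
    HasSum (fun b => μ.real {ω | X ω = b}) (μ.real Set.univ) := by
  simpa only [Set.mem_univ, and_true] using hasSum_measureReal_eq_and_mem (μ := μ) hX Set.univ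

theorem hasSum_measureReal_indicator (hX : Measurable X) (A : Set S) :
    HasSum (fun b => A.indicator (fun b => μ.real {ω | X ω = b}) b) (μ.real {ω | X ω ∈ A}) := by
  convert hasSum_measureReal_eq_and_mem (μ := μ) hX {ω | X ω ∈ A} using 1
  ext b
  simp only [Set.mem_ofPred_eq]
  by_cases hb : b ∈ A
  · rw [Set.indicator_of_mem hb]
    congr 1
    ext ω
    simp +contextual [hb]
  · have hempty : {ω | X ω = b ∧ X ω ∈ A} = ∅ :=
      Set.eq_empty_of_forall_notMem fun ω ⟨hω, hωA⟩ => hb (hω ▸ hωA)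
    rw [Set.indicator_of_notMem hb, hempty, measureReal_empty]

theorem hasSum_measureReal_and_eq_left (hY : Measurable Y) (b : S) :
    HasSum (fun c => μ.real {ω | Y ω = c ∧ X ω = b}) (μ.real {ω | X ω = b}) :=
  hasSum_measureReal_eq_and_mem hY _

theorem hasSum_measureReal_and_eq_right (hX : Measurable X) (c : S) :
    HasSum (fun b => μ.real {ω | Y ω = c ∧ X ω = b}) (μ.real {ω | Y ω = c}) := by
  simpa only [Set.mem_ofPred_eq, and_comm] using
    hasSum_measureReal_eq_and_mem (μ := μ) hX {ω | Y ω = c}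

theorem summable_uncurry_measureReal_and_eq (hX : Measurable X) (hY : Measurable Y) :
    Summable (Function.uncurry fun b c => μ.real {ω | Y ω = c ∧ X ω = b}) := by
  refine (summable_prod_of_nonneg fun _ => measureReal_nonneg).2
    ⟨fun b => (hasSum_measureReal_and_eq_left hY b).summable, ?_⟩
  simpa only [Function.uncurry_apply_pair, (hasSum_measureReal_and_eq_left hY _).tsum_eq]
    using (hasSum_measureReal_eq (μ := μ) hX).summable

theorem abs_measureReal_sub_le_half_tsum (hX : Measurable X) (hX' : Measurable X') (A : Set S) :
    |μ.real {ω | X ω ∈ A} - μ.real {ω | X' ω ∈ A}|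
      ≤ 1 / 2 * ∑' b, |μ.real {ω | X ω = b} - μ.real {ω | X' ω = b}| := by
  have hdiff := (hasSum_measureReal_eq (μ := μ) hX).sub (hasSum_measureReal_eq (μ := μ) hX')
  rw [← ((hasSum_measureReal_indicator hX A).sub (hasSum_measureReal_indicator hX' A)).tsum_eq]
  simpa only [Set.indicator_sub] using
    abs_tsum_indicator_le_half_tsum_abs hdiff.summable (by rw [hdiff.tsum_eq, sub_self]) A

end Distributions

section Transitions

variable {Ω S : Type*} [MeasurableSpace Ω]

/-- The `ℓ¹` distance between the conditional laws of `Y` given `X = b` and of `Y'` given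
`X' = b`. -/
noncomputable def transitionDist (μ : Measure Ω) (X Y X' Y' : Ω → S) (b : S) : ℝ :=
  if μ.real {ω | X ω = b} ≠ 0 ∧ μ.real {ω | X' ω = b} ≠ 0 then
    ∑' c, |μ.real {ω | Y' ω = c ∧ X' ω = b} / μ.real {ω | X' ω = b}
      - μ.real {ω | Y ω = c ∧ X ω = b} / μ.real {ω | X ω = b}|
  else 0

variable {μ : Measure Ω} {X Y X' Y' : Ω → S}

theorem transitionDist_nonneg (b : S) : 0 ≤ transitionDist μ X Y X' Y' b := by
  unfold transitionDist
  split_ifs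
  exacts [tsum_nonneg fun _ => abs_nonneg _, le_rfl]

variable [IsFiniteMeasure μ]

theorem tsum_ite_abs_eq_transitionDist {d : S → ℝ} {b : S}
    (hd : ∀ c, μ {ω | X' ω = b} ≠ 0 → μ {ω | X ω = b} ≠ 0 →
      μ.real {ω | Y' ω = c ∧ X' ω = b} / μ.real {ω | X' ω = b}
        = μ.real {ω | Y ω = c ∧ X ω = b} / μ.real {ω | X ω = b} + d c) :
    ∑' c, (if (μ {ω | X ω = b} ≠ 0 ∧ μ {ω | X' ω = b} ≠ 0) ∧
        (μ {ω | Y ω = c} ≠ 0 ∨ μ {ω | Y' ω = c} ≠ 0) then |d c| else 0)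
      = transitionDist μ X Y X' Y' b := by
  have hreal (s : Set Ω) : μ.real s ≠ 0 ↔ μ s ≠ 0 := measureReal_ne_zero_iff
  unfold transitionDist
  simp only [hreal]
  by_cases hb : μ {ω | X ω = b} ≠ 0 ∧ μ {ω | X' ω = b} ≠ 0
  · rw [if_pos hb]
    refine tsum_congr fun c => ?_
    by_cases hc : μ {ω | Y ω = c} ≠ 0 ∨ μ {ω | Y' ω = c} ≠ 0
    · rw [if_pos ⟨hb, hc⟩, hd c hb.2 hb.1, add_sub_cancel_left]
    · rw [if_neg fun h => hc h.2]
      obtain ⟨hYc, hY'c⟩ := not_or.1 hc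
      have hnull (Z Z' : Ω → S) (hZ : ¬μ {ω | Z ω = c} ≠ 0) :
          μ.real {ω | Z ω = c ∧ Z' ω = b} = 0 :=
        (measureReal_eq_zero_iff (measure_ne_top _ _)).2
          (measure_mono_null (fun _ h => h.1) (not_not.1 hZ))
      rw [hnull Y X hYc, hnull Y' X' hY'c, zero_div, zero_div, sub_zero, abs_zero]
  · simp only [hb, false_and, if_false, tsum_zero]

variable [Countable S] [MeasurableSpace S] [MeasurableSingletonClass S]

theorem transitionDist_le_two (hY : Measurable Y) (hY' : Measurable Y') (b : S) :
    transitionDist μ X Y X' Y' b ≤ 2 := by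
  unfold transitionDist
  split_ifs
  · have h := tsum_abs_div_tsum_sub_div_tsum_le_two (fun _ => measureReal_nonneg)
      (fun _ => measureReal_nonneg) (hasSum_measureReal_and_eq_left (μ := μ) (X := X) hY b).summable
      (hasSum_measureReal_and_eq_left (μ := μ) (X := X') hY' b).summable
    rwa [(hasSum_measureReal_and_eq_left hY b).tsum_eq,
      (hasSum_measureReal_and_eq_left hY' b).tsum_eq] at h
  · exact zero_le_two

theorem tsum_abs_sub_measureReal_and_eq_le (hY : Measurable Y) (hY' : Measurable Y') (b : S) :
    ∑' c, |μ.real {ω | Y ω = c ∧ X ω = b} - μ.real {ω | Y' ω = c ∧ X' ω = b}|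
      ≤ |μ.real {ω | X ω = b} - μ.real {ω | X' ω = b}|
        + transitionDist μ X Y X' Y' b * μ.real {ω | X ω = b} := by
  have hu := hasSum_measureReal_and_eq_left (μ := μ) (X := X) hY b
  have hv := hasSum_measureReal_and_eq_left (μ := μ) (X := X') hY' b
  have h := tsum_abs_sub_le_abs_tsum_sub_add (fun _ => measureReal_nonneg)
    (fun _ => measureReal_nonneg) hu.summable hv.summable
  rwa [hu.tsum_eq, hv.tsum_eq] at h

theorem tsum_abs_sub_measureReal_le_add (hX : Measurable X) (hY : Measurable Y)
    (hX' : Measurable X') (hY' : Measurable Y') :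
    ∑' c, |μ.real {ω | Y ω = c} - μ.real {ω | Y' ω = c}|
      ≤ ∑' b, |μ.real {ω | X ω = b} - μ.real {ω | X' ω = b}|
        + ∑' b, transitionDist μ X Y X' Y' b * μ.real {ω | X ω = b} := by
  have hp := (hasSum_measureReal_eq (μ := μ) hX).summable
  have hq := (hasSum_measureReal_eq (μ := μ) hX').summable
  have hjoint := (summable_uncurry_measureReal_and_eq (μ := μ) hX hY).sub
    (summable_uncurry_measureReal_and_eq (μ := μ) hX' hY')
  have hdist : Summable fun b => transitionDist μ X Y X' Y' b * μ.real {ω | X ω = b} :=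
    (hp.mul_left 2).of_nonneg_of_le (fun b => mul_nonneg (transitionDist_nonneg b)
      measureReal_nonneg) fun b => mul_le_mul_of_nonneg_right
        (transitionDist_le_two hY hY' b) measureReal_nonneg
  calc ∑' c, |μ.real {ω | Y ω = c} - μ.real {ω | Y' ω = c}|
      = ∑' c, |∑' b, (μ.real {ω | Y ω = c ∧ X ω = b} - μ.real {ω | Y' ω = c ∧ X' ω = b})| := by
        congr! 3 with c
        exact ((hasSum_measureReal_and_eq_right hX c).sub
          (hasSum_measureReal_and_eq_right hX' c)).tsum_eq.symm
    _ ≤ ∑' b, ∑' c, |μ.real {ω | Y ω = c ∧ X ω = b} - μ.real {ω | Y' ω = c ∧ X' ω = b}| :=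
        tsum_abs_tsum_le_tsum_tsum_abs hjoint
    _ ≤ ∑' b, (|μ.real {ω | X ω = b} - μ.real {ω | X' ω = b}|
          + transitionDist μ X Y X' Y' b * μ.real {ω | X ω = b}) :=
        Summable.tsum_le_tsum (tsum_abs_sub_measureReal_and_eq_le hY hY') hjoint.abs.prod
          ((hp.sub hq).abs.add hdist)
    _ = _ := (hp.sub hq).abs.tsum_add hdist

theorem tsum_abs_sub_measureReal_le_sum_range {w w' : ℕ → Ω → S}
    (hw : ∀ i, Measurable (w i)) (hw' : ∀ i, Measurable (w' i))
    (h0 : ∀ b, μ.real {ω | w 0 ω = b} = μ.real {ω | w' 0 ω = b}) (n : ℕ) :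
    ∑' b, |μ.real {ω | w n ω = b} - μ.real {ω | w' n ω = b}|
      ≤ ∑ i ∈ Finset.range n, ∑' b,
          transitionDist μ (w i) (w (i + 1)) (w' i) (w' (i + 1)) b * μ.real {ω | w i ω = b} := by
  induction n with
  | zero =>
    simp only [h0, sub_self, abs_zero, tsum_zero, Finset.range_zero, Finset.sum_empty, le_refl]
  | succ n ih =>
    rw [Finset.sum_range_succ]
    linarith [tsum_abs_sub_measureReal_le_add (μ := μ) (hw n) (hw (n + 1)) (hw' n) (hw' (n + 1))]

end Transitions

/-- Coupling lemma: if the transition probabilities of two sequences `w`, `w'` of random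
variables agree up to errors `δ(i,b,a)`, then the distributions of `w_n` and `w'_n` are close. -/
theorem approx_transition_coupling {Ω : Type*} [MeasureSpace Ω]
    [IsProbabilityMeasure (ℙ : Measure Ω)]
    {S : Type*} [Countable S] [MeasurableSpace S] [MeasurableSingletonClass S] [Zero S]
    (w w' : ℕ → Ω → S)
    (hw0 : ∀ ω, w 0 ω = 0) (hw'0 : ∀ ω, w' 0 ω = 0)
    (hwm : ∀ i, Measurable (w i)) (hw'm : ∀ i, Measurable (w' i))
    (δ : ℕ → S → S → ℝ)
    (hδ : ∀ (i : ℕ) (b a : S),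
      ℙ {ω | w' i ω = b} ≠ 0 → ℙ {ω | w i ω = b} ≠ 0 →
      (ℙ {ω | w' (i + 1) ω = a ∧ w' i ω = b}).toReal / (ℙ {ω | w' i ω = b}).toReal
        = (ℙ {ω | w (i + 1) ω = a ∧ w i ω = b}).toReal / (ℙ {ω | w i ω = b}).toReal
          + δ i b a)
    (n : ℕ) (A : Set S) :
    |(ℙ {ω | w n ω ∈ A}).toReal - (ℙ {ω | w' n ω ∈ A}).toReal| ≤
      (1 / 2) * ∑ i ∈ Finset.range n, ∑' b : S, ∑' c : S,
        (if (ℙ {ω | w i ω = b} ≠ 0 ∧ ℙ {ω | w' i ω = b} ≠ 0) ∧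
            (ℙ {ω | w (i + 1) ω = c} ≠ 0 ∨ ℙ {ω | w' (i + 1) ω = c} ≠ 0)
          then |δ i b c| * (ℙ {ω | w i ω = b}).toReal else 0)
    ∧ (1 / 2) * ∑ i ∈ Finset.range n, ∑' b : S, ∑' c : S,
        (if (ℙ {ω | w i ω = b} ≠ 0 ∧ ℙ {ω | w' i ω = b} ≠ 0) ∧
            (ℙ {ω | w (i + 1) ω = c} ≠ 0 ∨ ℙ {ω | w' (i + 1) ω = c} ≠ 0)
          then |δ i b c| * (ℙ {ω | w i ω = b}).toReal else 0)
      ≤ (1 / 2) * ∑ i ∈ Finset.range n, ⨆ b : S, ∑' c : S,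
          (if (ℙ {ω | w i ω = b} ≠ 0 ∧ ℙ {ω | w' i ω = b} ≠ 0) ∧
              (ℙ {ω | w (i + 1) ω = c} ≠ 0 ∨ ℙ {ω | w' (i + 1) ω = c} ≠ 0)
            then |δ i b c| else 0) := by
  have hdist (i : ℕ) (b : S) := tsum_ite_abs_eq_transitionDist (μ := ℙ) (X := w i)
    (Y := w (i + 1)) (X' := w' i) (Y' := w' (i + 1)) (hδ i b)
  simp only [← ite_zero_mul, tsum_mul_right, hdist, ← measureReal_def]
  refine ⟨(abs_measureReal_sub_le_half_tsum (hwm n) (hw'm n) A).trans ?_, ?_⟩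
  · gcongr
    exact tsum_abs_sub_measureReal_le_sum_range hwm hw'm (fun b => by simp only [hw0, hw'0]) n
  · gcongr with i
    exact tsum_mul_le_ciSup transitionDist_nonneg ⟨2, Set.forall_mem_range.2 fun b =>
      transitionDist_le_two (hwm (i + 1)) (hw'm (i + 1)) b⟩ (fun _ => measureReal_nonneg)
      (probReal_univ (μ := (ℙ : Measure Ω)) ▸ hasSum_measureReal_eq (hwm i))
end

section
/- Let a, n be positive integers, G a finite abelian group whose exponent divides a, and X the reduction mod a of a random vector in ℤ^n with independent entries, each of which takes every residue class mod p with probability at most 1-α for every prime p (α-balanced). Let F : (ℤ/aℤ)^n → G be a homomorphism which is a code of distance w, meaning that for every subset σ ⊂ [n] with |σ| < w, F remains surjective when restricted to the coordinates outside σ. Then for every A ∈ G, |P(FX = A) - |G|^{-1}| ≤ ((|G|-1)/|G|)·exp(-αw/a²). -/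
/-!
Fourier analysis on `G`. By orthogonality of characters, `|P(FX = A) - |G|⁻¹|` is at most
`|G|⁻¹ ∑_{ψ ≠ 1} |E ψ(FX)|`. With `hᵢ = F(vᵢ)` we have `ψ(FX) = ∏ ψ(hᵢ)^{xᵢ}`, so by independence
`E ψ(FX)` factors over the coordinates. For `ψ ≠ 1` the code property gives `ψ(hᵢ) ≠ 1` for at
least `w` coordinates, and there `ζ = ψ(hᵢ)` is a nontrivial `a`-th root of unity. Distinct
`a`-th roots of unity `s, t` satisfy `Re(s t̄) ≤ 1 - 8/a²`, and `ζ^{xᵢ}` takes no value with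
probability above `1 - α` (equal powers force congruence modulo a prime dividing the order of
`ζ`), so `|E ζ^{xᵢ}|² ≤ 1 - 8α/a² ≤ exp(-2α/a²)`.
-/

open MeasureTheory ProbabilityTheory
open Real ComplexConjugate Finset

lemma Real.cos_two_pi_mul_div_le {a k : ℕ} (hk : 0 < k) (hka : k < a) :
    cos (2 * π * k / a) ≤ 1 - 8 / (a : ℝ) ^ 2 := by
  have ha : (0 : ℝ) < a := by exact_mod_cast hk.trans hka
  -- replace `k` by `a - k` if needed, so that the angle lies in `(0, π]`
  wlog hk2 : 2 * k ≤ a generalizing k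
  · have hsymm : 2 * π * k / a = 2 * π - 2 * π * (a - k : ℕ) / a := by
      rw [Nat.cast_sub hka.le]; field_simp; ring
    rw [hsymm, cos_two_pi_sub]
    exact this (by omega) (by omega) (by omega)
  have hk1 : (1 : ℝ) ≤ k := by exact_mod_cast hk
  have hk2' : 2 * (k : ℝ) ≤ a := by exact_mod_cast hk2
  have hangle : |2 * π * k / a| ≤ π := by
    rw [abs_of_nonneg (by positivity), div_le_iff₀ ha]; nlinarith [pi_pos]
  calc cos (2 * π * k / a) ≤ 1 - 2 / π ^ 2 * (2 * π * k / a) ^ 2 :=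
        cos_le_one_sub_mul_cos_sq hangle
    _ = 1 - 8 * k ^ 2 / (a : ℝ) ^ 2 := by field_simp; ring
    _ ≤ 1 - 8 / (a : ℝ) ^ 2 := by gcongr; nlinarith

lemma Complex.re_le_one_sub_of_pow_eq_one {a : ℕ} (ha : 0 < a) {ζ : ℂ} (hζa : ζ ^ a = 1)
    (hζ : ζ ≠ 1) : ζ.re ≤ 1 - 8 / (a : ℝ) ^ 2 := by
  have : NeZero a := ⟨ha.ne'⟩
  obtain ⟨k, hka, rfl⟩ := (Complex.isPrimitiveRoot_exp a ha.ne').eq_pow_of_pow_eq_one hζa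
  have hk : 0 < k := Nat.pos_of_ne_zero (by rintro rfl; exact hζ (pow_zero _))
  have hre : (exp (2 * π * I / a) ^ k).re = Real.cos (2 * π * k / a) := by
    rw [← exp_nat_mul, ← exp_ofReal_mul_I_re]
    push_cast; ring_nf
  exact hre ▸ Real.cos_two_pi_mul_div_le hk hka

lemma Complex.inner_le_one_sub_of_pow_eq_one {a : ℕ} (ha : 0 < a) {s t : ℂ} (hs : s ^ a = 1)
    (ht : t ^ a = 1) (hst : s ≠ t) : inner ℝ s t ≤ 1 - 8 / (a : ℝ) ^ 2 := by
  have hs0 : s ≠ 0 := by rintro rfl; simp [ha.ne'] at hs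
  have hconj : conj s = s⁻¹ := by
    rw [Complex.inv_def, ← Complex.sq_norm, Complex.norm_eq_one_of_pow_eq_one hs ha.ne']; simp
  rw [Complex.inner, hconj]
  refine Complex.re_le_one_sub_of_pow_eq_one ha
    (by rw [mul_pow, inv_pow, hs, ht, inv_one, one_mul]) ?_
  rwa [ne_eq, mul_inv_eq_one₀ hs0, eq_comm]

lemma intCast_eq_intCast_of_zpow_eq_zpow {M : Type*} [GroupWithZero M] {ζ : M} (hζ : ζ ≠ 0)
    {q : ℕ} (hq : q ∣ orderOf ζ) {m k : ℤ} (h : ζ ^ m = ζ ^ k) : (m : ZMod q) = k := by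
  set u := Units.mk0 ζ hζ
  have hu : u ^ m = u ^ k := Units.ext <| by simpa [u] using h
  rw [zpow_eq_zpow_iff_modEq, ← orderOf_units, Units.val_mk0] at hu
  exact (ZMod.intCast_eq_intCast_iff _ _ _).mpr (hu.of_dvd (Int.natCast_dvd_natCast.mpr hq))

lemma norm_sum_smul_sq_le_of_inner_le {E : Type*} [NormedAddCommGroup E] [InnerProductSpace ℝ E]
    {S : Finset E} {p : E → ℝ} {α δ : ℝ} (hδ : 0 ≤ δ) (hS : ∀ s ∈ S, ‖s‖ = 1)
    (hsep : ∀ s ∈ S, ∀ t ∈ S, s ≠ t → inner ℝ s t ≤ 1 - δ)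
    (hp0 : ∀ s ∈ S, 0 ≤ p s) (hp1 : ∑ s ∈ S, p s = 1) (hpα : ∀ s ∈ S, p s ≤ 1 - α) :
    ‖∑ s ∈ S, p s • s‖ ^ 2 ≤ 1 - δ * α := by
  classical
  have hinner : ∀ s ∈ S, ∀ t ∈ S, inner ℝ s t ≤ 1 - δ + δ * if s = t then 1 else 0 := by
    intro s hs t ht
    split_ifs with hst
    · rw [hst, real_inner_self_eq_norm_sq, hS t ht]; linarith
    · linarith [hsep s hs t ht hst]
  have hsq : ∑ s ∈ S, p s * p s ≤ 1 - α := by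
    calc ∑ s ∈ S, p s * p s ≤ ∑ s ∈ S, p s * (1 - α) :=
          Finset.sum_le_sum fun s hs => mul_le_mul_of_nonneg_left (hpα s hs) (hp0 s hs)
      _ = 1 - α := by rw [← Finset.sum_mul, hp1, one_mul]
  calc ‖∑ s ∈ S, p s • s‖ ^ 2 = ∑ s ∈ S, ∑ t ∈ S, p s * p t * inner ℝ s t := by
        simp only [← real_inner_self_eq_norm_sq, sum_inner, inner_sum, real_inner_smul_left,
          real_inner_smul_right, mul_assoc]
        rw [Finset.sum_comm]
        exact Finset.sum_congr rfl fun _ _ => Finset.sum_congr rfl fun _ _ => by ring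
    _ ≤ ∑ s ∈ S, ∑ t ∈ S, p s * p t * (1 - δ + δ * if s = t then 1 else 0) :=
        Finset.sum_le_sum fun s hs => Finset.sum_le_sum fun t ht =>
          mul_le_mul_of_nonneg_left (hinner s hs t ht) (mul_nonneg (hp0 s hs) (hp0 t ht))
    _ = (1 - δ) * (∑ s ∈ S, p s) ^ 2 + δ * ∑ s ∈ S, p s * p s := by
        simp only [mul_add, Finset.sum_add_distrib, mul_ite, mul_one, mul_zero, sq,
          Finset.sum_ite_eq]
        rw [Finset.sum_congr rfl fun s hs => if_pos hs, Finset.sum_mul_sum, Finset.mul_sum,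
          Finset.mul_sum]
        congr 1
        · exact Finset.sum_congr rfl fun _ _ => by
            rw [Finset.mul_sum]; exact Finset.sum_congr rfl fun _ _ => by ring
        · exact Finset.sum_congr rfl fun _ _ => by ring
    _ ≤ 1 - δ * α := by rw [hp1]; nlinarith

lemma integral_eq_sum_measureReal_smul {Ω E : Type*} [MeasurableSpace Ω] {μ : Measure Ω}
    [IsFiniteMeasure μ] [NormedAddCommGroup E] [NormedSpace ℝ E] [CompleteSpace E]
    {f : Ω → E} {S : Finset E} (hfS : ∀ ω, f ω ∈ S) (hf : ∀ s ∈ S, MeasurableSet (f ⁻¹' {s})) :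
    ∫ ω, f ω ∂μ = ∑ s ∈ S, μ.real (f ⁻¹' {s}) • s := by
  have hdecomp : f = fun ω => ∑ s ∈ S, (f ⁻¹' {s}).indicator (fun _ => s) ω := by
    ext ω
    rw [Finset.sum_eq_single_of_mem (f ω) (hfS ω) fun s _ hs => ?_]
    · simp
    · simp [Ne.symm hs]
  conv_lhs => rw [hdecomp]
  rw [integral_finsetSum _ fun s hs => (integrable_const s).indicator (hf s hs)]
  exact Finset.sum_congr rfl fun s hs => integral_indicator_const s (hf s hs)

lemma norm_integral_zpow_le_exp {Ω : Type*} [MeasurableSpace Ω] {μ : Measure Ω}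
    [IsProbabilityMeasure μ] {a : ℕ} (ha : 0 < a) {ζ : ℂ} (hζa : ζ ^ a = 1) (hζ : ζ ≠ 1)
    {α : ℝ} (hα0 : 0 ≤ α) (hα1 : α ≤ 1) {Y : Ω → ℤ} (hY : Measurable Y)
    (hbal : ∀ p : ℕ, p.Prime → ∀ r : ZMod p,
      μ {ω | (Y ω : ZMod p) = r} ≤ ENNReal.ofReal (1 - α)) :
    ‖∫ ω, ζ ^ Y ω ∂μ‖ ≤ exp (-α / a ^ 2) := by
  set S := Polynomial.nthRootsFinset a (1 : ℂ)
  have hS : ∀ s, s ∈ S ↔ s ^ a = 1 := fun s => Polynomial.mem_nthRootsFinset ha 1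
  have hζ0 : ζ ≠ 0 := by rintro rfl; simp [ha.ne'] at hζa
  have hYS : ∀ ω, ζ ^ Y ω ∈ S := fun ω => (hS _).mpr <| by
    rw [← zpow_natCast, ← zpow_mul, mul_comm, zpow_mul, zpow_natCast, hζa, one_zpow]
  have hmeas : ∀ s, MeasurableSet ((fun ω => ζ ^ Y ω) ⁻¹' {s}) :=
    fun s => hY (MeasurableSet.of_discrete (s := (ζ ^ · : ℤ → ℂ) ⁻¹' {s}))
  -- `ζ ^ m = ζ ^ k` forces `m ≡ k` modulo any prime `q` dividing the order of `ζ`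
  set q := (orderOf ζ).minFac
  have hq : q.Prime := Nat.minFac_prime (by rwa [ne_eq, orderOf_eq_one_iff])
  have hfiber : ∀ s, μ ((fun ω => ζ ^ Y ω) ⁻¹' {s}) ≤ ENNReal.ofReal (1 - α) := by
    intro s
    by_cases hs : ∃ ω₀, ζ ^ Y ω₀ = s
    · obtain ⟨ω₀, rfl⟩ := hs
      refine (measure_mono fun ω hω => ?_).trans (hbal q hq (Y ω₀))
      exact intCast_eq_intCast_of_zpow_eq_zpow hζ0 (Nat.minFac_dvd _) hω
    · simp [Set.preimage, not_exists.mp hs]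
  have hsq : ‖∫ ω, ζ ^ Y ω ∂μ‖ ^ 2 ≤ 1 - 8 / (a : ℝ) ^ 2 * α := by
    rw [integral_eq_sum_measureReal_smul hYS fun s _ => hmeas s]
    refine norm_sum_smul_sq_le_of_inner_le (by positivity)
      (fun s hs => Complex.norm_eq_one_of_pow_eq_one ((hS s).mp hs) ha.ne')
      (fun s hs t ht => Complex.inner_le_one_sub_of_pow_eq_one ha ((hS s).mp hs) ((hS t).mp ht))
      (fun _ _ => measureReal_nonneg) ?_
      (fun s _ => ENNReal.toReal_le_of_le_ofReal (by linarith) (hfiber s))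
    rw [sum_measureReal_preimage_singleton _ fun s _ => hmeas s, Set.preimage_eq_univ_iff.mpr
      (by rintro _ ⟨ω, rfl⟩; exact hYS ω), probReal_univ]
  refine (pow_le_pow_iff_left₀ (norm_nonneg _) (exp_nonneg _) two_ne_zero).mp ?_
  calc ‖∫ ω, ζ ^ Y ω ∂μ‖ ^ 2 ≤ 1 - 8 / (a : ℝ) ^ 2 * α := hsq
    _ ≤ -2 * α / a ^ 2 + 1 := by
        have : 0 ≤ α / (a : ℝ) ^ 2 := by positivity
        linarith [show 8 / (a : ℝ) ^ 2 * α = 8 * (α / a ^ 2) by ring,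
          show -2 * α / (a : ℝ) ^ 2 = -2 * (α / a ^ 2) by ring]
    _ ≤ exp (-2 * α / a ^ 2) := add_one_le_exp _
    _ = exp (-α / a ^ 2) ^ 2 := by rw [← exp_nat_mul]; ring_nf

lemma norm_integral_prod_zpow_le {Ω ι : Type*} [MeasurableSpace Ω] {μ : Measure Ω}
    [IsProbabilityMeasure μ] [Fintype ι] {a : ℕ} (ha : 0 < a) {ζ : ι → ℂ}
    (hζa : ∀ i, ζ i ^ a = 1) {α : ℝ} (hα0 : 0 ≤ α) (hα1 : α ≤ 1) {Y : ι → Ω → ℤ}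
    (hY : ∀ i, Measurable (Y i)) (hindep : iIndepFun Y μ)
    (hbal : ∀ i, ∀ p : ℕ, p.Prime → ∀ r : ZMod p,
      μ {ω | (Y i ω : ZMod p) = r} ≤ ENNReal.ofReal (1 - α)) :
    ‖∫ ω, ∏ i, ζ i ^ Y i ω ∂μ‖ ≤ exp (-α / a ^ 2) ^ #{i | ζ i ≠ 1} := by
  rw [hindep.integral_fun_prod_comp (fun i => (hY i).aemeasurable)
    (fun i => (measurable_of_countable _).aestronglyMeasurable), norm_prod,
    ← Finset.prod_const, Finset.prod_filter]
  refine Finset.prod_le_prod (fun _ _ => norm_nonneg _) fun i _ => ?_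
  split_ifs with hζ
  · exact norm_integral_zpow_le_exp ha (hζa i) hζ hα0 hα1 (hY i) (hbal i)
  · simp [not_not.mp hζ]

lemma AddChar.map_sum_eq_prod {A M ι : Type*} [AddCommMonoid A] [CommMonoid M]
    (ψ : AddChar A M) (s : Finset ι) (f : ι → A) : ψ (∑ i ∈ s, f i) = ∏ i ∈ s, ψ (f i) :=
  map_prod ψ.toMonoidHom (fun i => Multiplicative.ofAdd (f i)) s

lemma AddChar.apply_intCast_eq_prod_zpow {ι G M : Type*} [Fintype ι] [DecidableEq ι] {a : ℕ}
    [AddCommGroup G] [DivisionCommMonoid M] (ψ : AddChar G M) (F : (ι → ZMod a) →+ G)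
    (y : ι → ℤ) : ψ (F fun i => (y i : ZMod a)) = ∏ i, ψ (F (Pi.single i 1)) ^ y i := by
  have hy : (fun i => (y i : ZMod a)) = ∑ i, y i • Pi.single i (1 : ZMod a) := by
    ext j; simp [Finset.sum_apply, Pi.single_apply]
  rw [hy, map_sum, ψ.map_sum_eq_prod]
  simp only [map_zsmul, map_zsmul_eq_zpow]

lemma le_card_filter_apply_single_ne_one {ι G M : Type*} [Fintype ι] [DecidableEq ι] {a w : ℕ}
    [AddCommGroup G] [DivisionCommMonoid M] [DecidableEq M] (F : (ι → ZMod a) →+ G)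
    (hcode : ∀ σ : Finset ι, σ.card < w → ∀ g : G,
      ∃ v : ι → ZMod a, (∀ i ∈ σ, v i = 0) ∧ F v = g)
    {ψ : AddChar G M} (hψ : ψ ≠ 1) : w ≤ #{i | ψ (F (Pi.single i 1)) ≠ 1} := by
  by_contra! hlt
  apply hψ
  ext g
  obtain ⟨v, hv0, rfl⟩ := hcode _ hlt g
  have hv : v = fun i => (((v i).cast : ℤ) : ZMod a) := by ext i; simp
  rw [hv, AddChar.apply_intCast_eq_prod_zpow, AddChar.one_apply]
  refine Finset.prod_eq_one fun i _ => ?_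
  by_cases hi : ψ (F (Pi.single i 1)) = 1
  · rw [hi, one_zpow]
  · rw [hv0 i (by simpa using hi), ZMod.cast_zero, zpow_zero]

lemma abs_measureReal_eq_sub_inv_card_le {Ω G : Type*} [MeasurableSpace Ω] {μ : Measure Ω}
    [IsProbabilityMeasure μ] [AddCommGroup G] [Fintype G] [MeasurableSpace G]
    [DiscreteMeasurableSpace G] {W : Ω → G} (hW : Measurable W) {ε : ℝ}
    (hε : ∀ ψ : AddChar G ℂ, ψ ≠ 1 → ‖∫ ω, ψ (W ω) ∂μ‖ ≤ ε) (A : G) :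
    |μ.real {ω | W ω = A} - (Fintype.card G : ℝ)⁻¹|
      ≤ ((Fintype.card G - 1 : ℝ) / Fintype.card G) * ε := by
  classical
  set N := Fintype.card G
  have hN : (0 : ℝ) < N := by exact_mod_cast Fintype.card_pos
  have hA : MeasurableSet {ω | W ω = A} := hW (measurableSet_singleton A)
  have hint : ∀ ψ : AddChar G ℂ, Integrable (fun ω => ψ (W ω)) μ := fun ψ =>
    .of_bound (Measurable.of_discrete.comp hW).aestronglyMeasurable 1
      (ae_of_all _ fun ω => (ψ.norm_apply _).le)
  have hinv : (N : ℂ) * μ.real {ω | W ω = A} = ∑ ψ : AddChar G ℂ, ψ (-A) * ∫ ω, ψ (W ω) ∂μ := by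
    calc (N : ℂ) * μ.real {ω | W ω = A}
        = ∫ ω, ∑ ψ : AddChar G ℂ, ψ (W ω - A) ∂μ := by
          have hind : ∀ ω, (if W ω - A = 0 then (Fintype.card G : ℂ) else 0)
              = {ω | W ω = A}.indicator (fun _ => (Fintype.card G : ℂ)) ω := fun ω => by
            simp [Set.indicator_apply, sub_eq_zero]
          simp_rw [AddChar.sum_apply_eq_ite, hind]
          rw [integral_indicator_const _ hA, Complex.real_smul, mul_comm]
      _ = ∑ ψ : AddChar G ℂ, ψ (-A) * ∫ ω, ψ (W ω) ∂μ := by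
          simp_rw [sub_eq_add_neg, AddChar.map_add_eq_mul]
          rw [integral_finsetSum _ fun ψ _ => (hint ψ).mul_const _]
          simp_rw [integral_mul_const, mul_comm]
  have hsplit : (N : ℂ) * μ.real {ω | W ω = A} - 1
      = ∑ ψ ∈ Finset.univ.erase (1 : AddChar G ℂ), ψ (-A) * ∫ ω, ψ (W ω) ∂μ := by
    rw [hinv, ← Finset.add_sum_erase _ _ (Finset.mem_univ 1)]
    simp
  calc |μ.real {ω | W ω = A} - (N : ℝ)⁻¹| = ‖(N : ℂ) * μ.real {ω | W ω = A} - 1‖ / N := by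
        rw [show (N : ℂ) * μ.real {ω | W ω = A} - 1
            = ((N * μ.real {ω | W ω = A} - 1 : ℝ) : ℂ) by push_cast; ring,
          Complex.norm_real, Real.norm_eq_abs, eq_div_iff hN.ne', ← abs_of_pos hN, ← abs_mul,
          abs_of_pos hN]
        congr 1
        field_simp
    _ ≤ (∑ ψ ∈ Finset.univ.erase (1 : AddChar G ℂ), ε) / N := by
        gcongr
        rw [hsplit]
        refine (norm_sum_le _ _).trans (Finset.sum_le_sum fun ψ hψ => ?_)
        rw [norm_mul, ψ.norm_apply, one_mul]
        exact hε ψ (Finset.ne_of_mem_erase hψ)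
    _ = ((N - 1 : ℝ) / N) * ε := by
        rw [Finset.sum_const, Finset.card_erase_of_mem (Finset.mem_univ _), Finset.card_univ,
          AddChar.card_eq, nsmul_eq_mul, Nat.cast_sub Fintype.card_pos]
        ring

theorem code_column_equidistribution_general {Ω : Type*} [MeasureSpace Ω]
    [IsProbabilityMeasure (ℙ : Measure Ω)]
    (a n : ℕ) (ha : 0 < a)
    {G : Type*} [AddCommGroup G] [Fintype G]
    (hexp : ∀ g : G, a • g = 0)
    (α : ℝ) (hα0 : 0 ≤ α) (hα1 : α ≤ 1)
    (w : ℕ)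
    (F : (Fin n → ZMod a) →+ G)
    (hcode : ∀ σ : Finset (Fin n), σ.card < w → ∀ g : G,
      ∃ v : Fin n → ZMod a, (∀ i ∈ σ, v i = 0) ∧ F v = g)
    (Y : Ω → Fin n → ℤ)
    (hmeas : ∀ i, Measurable fun ω => Y ω i)
    (hindep : iIndepFun (fun i ω => Y ω i) ℙ)
    (hbal : ∀ i (p : ℕ), p.Prime → ∀ r : ZMod p,
      ℙ {ω | ((Y ω i : ℤ) : ZMod p) = r} ≤ ENNReal.ofReal (1 - α))
    (A : G) :
    |(ℙ {ω | F (fun i => ((Y ω i : ℤ) : ZMod a)) = A}).toReal - (Fintype.card G : ℝ)⁻¹|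
      ≤ ((Fintype.card G - 1 : ℝ) / Fintype.card G) * Real.exp (-α * w / a ^ 2) := by
  let _ : MeasurableSpace G := ⊤
  have hFY : Measurable fun ω => F fun i => (Y ω i : ZMod a) :=
    (measurable_of_countable fun y : Fin n → ℤ => F fun i => (y i : ZMod a)).comp
      (measurable_pi_lambda _ hmeas)
  refine abs_measureReal_eq_sub_inv_card_le hFY (fun ψ hψ => ?_) A
  have hroot : ∀ i, ψ (F (Pi.single i 1)) ^ a = 1 := fun i => by
    rw [← AddChar.map_nsmul_eq_pow, hexp, AddChar.map_zero_eq_one]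
  simp_rw [AddChar.apply_intCast_eq_prod_zpow]
  calc ‖∫ ω, ∏ i, ψ (F (Pi.single i 1)) ^ Y ω i‖
      ≤ exp (-α / a ^ 2) ^ #{i | ψ (F (Pi.single i 1)) ≠ 1} :=
        norm_integral_prod_zpow_le ha hroot hα0 hα1 hmeas hindep hbal
    _ ≤ exp (-α / a ^ 2) ^ w :=
        pow_le_pow_of_le_one (exp_nonneg _)
          (exp_le_one_iff.mpr (by rw [neg_div]; exact neg_nonpos.mpr (by positivity)))
          (le_card_filter_apply_single_ne_one F hcode hψ)
    _ = exp (-α * w / a ^ 2) := by rw [← exp_nat_mul]; ring_nf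

/-- Code-column lemma: if `F : (ℤ/aℤ)^n → G` is a code of distance `w` and `X` is the
reduction mod `a` of a random integer vector with independent `α`-balanced entries, then
for every `A ∈ G`, `|P(FX = A) - |G|⁻¹| ≤ ((|G|-1)/|G|) exp(-αw/a²)`. -/
theorem code_column_equidistribution {Ω : Type*} [MeasureSpace Ω]
    [IsProbabilityMeasure (ℙ : Measure Ω)]
    (a n : ℕ) (ha : 0 < a) (hn : 0 < n)
    {G : Type*} [AddCommGroup G] [Fintype G]
    (hexp : ∀ g : G, a • g = 0)
    (α : ℝ) (hα0 : 0 ≤ α) (hα1 : α ≤ 1)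
    (w : ℕ)
    (F : (Fin n → ZMod a) →+ G)
    (hcode : ∀ σ : Finset (Fin n), σ.card < w → ∀ g : G,
      ∃ v : Fin n → ZMod a, (∀ i ∈ σ, v i = 0) ∧ F v = g)
    (Y : Ω → Fin n → ℤ)
    (hmeas : ∀ i, Measurable fun ω => Y ω i)
    (hindep : iIndepFun (fun i ω => Y ω i) ℙ)
    (hbal : ∀ i (p : ℕ), p.Prime → ∀ r : ZMod p,
      ℙ {ω | ((Y ω i : ℤ) : ZMod p) = r} ≤ ENNReal.ofReal (1 - α))
    (A : G) :
    |(ℙ {ω | F (fun i => ((Y ω i : ℤ) : ZMod a)) = A}).toReal - (Fintype.card G : ℝ)⁻¹|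
      ≤ ((Fintype.card G - 1 : ℝ) / Fintype.card G) * Real.exp (-α * w / a ^ 2) :=
  code_column_equidistribution_general a n ha hexp α hα0 hα1 w F hcode Y hmeas hindep hbal A
end

section
/- Let δ > 0, a, n positive integers, G a finite abelian group of exponent dividing a, and V = (ℤ/aℤ)^n with standard basis v_1,...,v_n. Suppose F ∈ Hom(V,G) is δ-robust for a subgroup H of G, meaning H is a minimal subgroup such that #{i ∈ [n] : F(v_i) ∉ H} ≤ ℓ([G:H])·δn, where ℓ(D) is the number of prime factors of D counted with multiplicity. Let π = {i ∈ [n] : F(v_i) ∉ H}. Then F restricted to the coordinates outside π is a code of distance δn in Hom(V_{∖π}, H), i.e., surjects onto H even after deleting any fewer than δn of the remaining coordinates. -/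
open scoped Classical ArithmeticFunction.Omega

/-!
Let `π` be the set of coordinates with `F(vᵢ) ∉ H` and let `K ≤ H` be the image under `F` of the
vectors vanishing on `σ ∪ π`, intersected with `H`. Every coordinate outside `σ ∪ π` has
`F(vᵢ) ∈ K`, so at most `|π| + |σ| < (ℓ([G:H]) + 1)·δn` coordinates leave `K`. If `K < H`, then
`[G:K]` is a proper multiple of `[G:H]`, so `ℓ([G:K]) ≥ ℓ([G:H]) + 1` and `K` would satisfy the
robustness bound, contradicting the minimality of `H`. Hence `K = H`, which is the code property.
-/

theorem AddSubgroup.cardFactors_index_lt_of_lt {G : Type*} [AddGroup G] {K H : AddSubgroup G}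
    (hKH : K < H) (hK : K.index ≠ 0) : Ω H.index < Ω K.index := by
  have hmul : K.relIndex H * H.index = K.index := AddSubgroup.relIndex_mul_index hKH.le
  have hrel : K.relIndex H ≠ 0 := left_ne_zero_of_mul (hmul ▸ hK)
  have hrel_ne_one : K.relIndex H ≠ 1 := fun h =>
    hKH.not_ge (AddSubgroup.relIndex_eq_one.mp h)
  rw [← hmul, ArithmeticFunction.cardFactors_mul hrel (right_ne_zero_of_mul (hmul ▸ hK))]
  have : 0 < Ω (K.relIndex H) :=
    ArithmeticFunction.cardFactors_pos_iff_one_lt.mpr (by omega)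
  omega

section CoordinateRestriction

variable {ι M G : Type*} [DecidableEq ι] [AddGroup M] [AddGroup G]

theorem single_mem_map_pi_bot_inf (F : (ι → M) →+ G) (H : AddSubgroup G) {S : Set ι} {i : ι}
    (hi : i ∉ S) (c : M) (hH : F (Pi.single i c) ∈ H) :
    F (Pi.single i c) ∈ (AddSubgroup.pi S fun _ => ⊥).map F ⊓ H :=
  ⟨AddSubgroup.mem_map_of_mem F (by simp [hi]), hH⟩

theorem card_filter_single_notMem_map_pi_bot_inf_le [Fintype ι] (F : (ι → M) →+ G)
    (H : AddSubgroup G) (σ : Finset ι) (c : M) :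
    (Finset.univ.filter fun i => F (Pi.single i c) ∉
        (AddSubgroup.pi (↑σ ∪ {i | F (Pi.single i c) ∉ H}) fun _ => ⊥).map F ⊓ H).card
      ≤ (Finset.univ.filter fun i => F (Pi.single i c) ∉ H).card + σ.card := by
  refine (Finset.card_le_card fun i hi => ?_).trans (Finset.card_union_le _ σ)
  by_contra hout
  simp only [Finset.mem_union, Finset.mem_filter, Finset.mem_univ, true_and, not_or,
    not_not] at hi hout
  exact hi (single_mem_map_pi_bot_inf F H (by simp [hout.1, hout.2]) c hout.1)

end CoordinateRestriction

theorem robust_restriction_is_code_general (δ : ℝ) (a n : ℕ)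
    {G : Type*} [AddCommGroup G] [Fintype G]
    (F : (Fin n → ZMod a) →+ G) (H : AddSubgroup G)
    (hrob : ((Finset.univ.filter fun i : Fin n => F (Pi.single i 1) ∉ H).card : ℝ)
      ≤ (Nat.primeFactorsList H.index).length * (δ * n))
    (hmin : ∀ H' : AddSubgroup G, H' < H →
      ¬ (((Finset.univ.filter fun i : Fin n => F (Pi.single i 1) ∉ H').card : ℝ)
        ≤ (Nat.primeFactorsList H'.index).length * (δ * n))) :
    ∀ σ : Finset (Fin n), (σ.card : ℝ) < δ * n → ∀ h ∈ H,
      ∃ v : Fin n → ZMod a, (∀ i ∈ σ, v i = 0) ∧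
        (∀ i : Fin n, F (Pi.single i 1) ∉ H → v i = 0) ∧ F v = h := by
  intro σ hσ h hh
  set K := (AddSubgroup.pi (↑σ ∪ {i | F (Pi.single i 1) ∉ H}) fun _ => ⊥).map F ⊓ H
  suffices hHK : H ≤ K by
    obtain ⟨v, hv, rfl⟩ := AddSubgroup.mem_map.mp (hHK hh).1
    simp only [AddSubgroup.mem_pi, AddSubgroup.mem_bot, Set.mem_union, Finset.mem_coe,
      Set.mem_ofPred_eq] at hv
    exact ⟨v, fun i hi => hv i (.inl hi), fun i hi => hv i (.inr hi), rfl⟩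
  by_contra hHK
  have hKH : K < H := inf_le_right.lt_of_not_ge hHK
  refine hmin K hKH ?_
  have hΩ : Ω H.index + 1 ≤ Ω K.index :=
    AddSubgroup.cardFactors_index_lt_of_lt hKH K.index_ne_zero_of_finite
  rw [← ArithmeticFunction.cardFactors_apply] at hrob ⊢
  have hδn : 0 ≤ δ * n := (Nat.cast_nonneg _).trans hσ.le
  calc ((Finset.univ.filter fun i => F (Pi.single i 1) ∉ K).card : ℝ)
      ≤ (Finset.univ.filter fun i => F (Pi.single i 1) ∉ H).card + σ.card := by
        exact_mod_cast card_filter_single_notMem_map_pi_bot_inf_le F H σ 1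
    _ ≤ (Ω H.index + 1 : ℝ) * (δ * n) := by linarith
    _ ≤ Ω K.index * (δ * n) := by gcongr; exact_mod_cast hΩ

/-- If `F : (ℤ/aℤ)^n → G` is `δ`-robust for a subgroup `H` of `G`, and
`π = {i : F(v_i) ∉ H}`, then `F` restricted to the coordinates outside `π` is a code of
distance `δn` with values in `H`. -/
theorem robust_restriction_is_code (δ : ℝ) (hδ : 0 < δ) (a n : ℕ) (ha : 0 < a) (hn : 0 < n)
    {G : Type*} [AddCommGroup G] [Fintype G] (hexp : ∀ g : G, a • g = 0)
    (F : (Fin n → ZMod a) →+ G) (H : AddSubgroup G)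
    (hrob : ((Finset.univ.filter fun i : Fin n => F (Pi.single i 1) ∉ H).card : ℝ)
      ≤ (Nat.primeFactorsList H.index).length * (δ * n))
    (hmin : ∀ H' : AddSubgroup G, H' < H →
      ¬ (((Finset.univ.filter fun i : Fin n => F (Pi.single i 1) ∉ H').card : ℝ)
        ≤ (Nat.primeFactorsList H'.index).length * (δ * n))) :
    ∀ σ : Finset (Fin n), (σ.card : ℝ) < δ * n → ∀ h ∈ H,
      ∃ v : Fin n → ZMod a, (∀ i ∈ σ, v i = 0) ∧
        (∀ i : Fin n, F (Pi.single i 1) ∉ H → v i = 0) ∧ F v = h :=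
  robust_restriction_is_code_general δ a n F H hrob hmin
end

section
/- Let δ > 0, a, n ≥ 1 integers, G a finite abelian group of exponent dividing a, H a subgroup of G of index D > 1, and H = G_{ℓ(D)} ⊂ ... ⊂ G_1 ⊂ G_0 = G a maximal chain of proper subgroups. The number of homomorphisms F : (ℤ/aℤ)^n → G such that F is δ-robust for H and such that for each 1 ≤ j ≤ ℓ(D) there are exactly w_j indices i ∈ [n] with F(v_i) ∈ G_{j-1} ∖ G_j, is at most |H|^{n - Σ_j w_j} · Π_{j=1}^{ℓ(D)} C(n, w_j) |G_{j-1}|^{w_j}. -/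
/-!
A homomorphism `F : (ℤ/aℤ)^n → G` is determined by the values `F(v_i)`. Label each index `i` by
the layer `G_j \ G_{j+1}` containing `F(v_i)`, or by `H` if there is none. The labelling is fixed
by choosing the `w_j` indices of each layer, in at most `∏ C(n, w_j)` ways, and once it is fixed,
each value `F(v_i)` ranges over `G_j` or over `H` according to the label of `i`.
-/

open scoped Classical

open Finset

theorem AddMonoidHom.ext_zmod_pi_single {ι G : Type*} [Finite ι] [DecidableEq ι] [AddCommGroup G]
    {a : ℕ} {f g : (ι → ZMod a) →+ G} (h : ∀ i, f (Pi.single i 1) = g (Pi.single i 1)) : f = g := by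
  refine AddMonoidHom.functions_ext _ f g fun i x => ?_
  obtain ⟨k, rfl⟩ := ZMod.intCast_surjective x
  have hsingle : (Pi.single i (k : ZMod a) : ι → ZMod a) = k • (Pi.single i 1 : ι → ZMod a) := by
    rw [← Pi.single_smul, zsmul_eq_mul, mul_one]
  rw [hsingle, map_zsmul, map_zsmul, h]

section LabelCounting

variable {ι X Λ : Type*} [Fintype ι] [Fintype X] [DecidableEq Λ]

theorem card_filter_comp_eq_prod [DecidableEq ι] (κ : X → Λ) (p : ι → Λ) :
    #{v : ι → X | ∀ i, κ (v i) = p i} = ∏ i, #{x | κ x = p i} := by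
  rw [← Fintype.card_piFinset]
  congr 1
  ext v
  simp [Fintype.mem_piFinset]

theorem card_labelings_le_prod_choose [DecidableEq ι] [Fintype Λ] (w : Λ → ℕ) :
    #{p : ι → Option Λ | ∀ j, #{i | p i = some j} = w j} ≤
      ∏ j, (Fintype.card ι).choose (w j) := by
  calc _ ≤ #(Fintype.piFinset fun j => powersetCard (w j) (univ : Finset ι)) := by
        refine card_le_card_of_injOn (fun p j => {i | p i = some j}) ?_ ?_
        · intro p hp
          simp_all [mem_powersetCard]
        · intro p _ q _ hpq
          funext i
          refine Option.ext fun j => ?_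
          simpa using congrArg (i ∈ ·) (congrFun hpq j)
    _ = _ := by simp [card_powersetCard]

theorem card_filter_eq_none_of_card_filter_eq_some [Fintype Λ] (p : ι → Option Λ) (w : Λ → ℕ)
    (hp : ∀ j, #{i | p i = some j} = w j) :
    #{i | p i = none} = Fintype.card ι - ∑ j, w j := by
  have := card_eq_sum_card_fiberwise (s := univ) (t := univ) (f := p) fun _ _ => mem_univ _
  rw [Fintype.sum_option] at this
  simp only [hp, card_univ] at this
  omega

theorem prod_comp_eq_of_card_filter_eq [Fintype Λ] (c : Option Λ → ℕ) (p : ι → Option Λ) (w : Λ → ℕ)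
    (hp : ∀ j, #{i | p i = some j} = w j) :
    ∏ i, c (p i) = c none ^ (Fintype.card ι - ∑ j, w j) * ∏ j, c (some j) ^ w j := by
  rw [← prod_fiberwise' univ p c, Fintype.prod_option]
  simp only [prod_const, card_filter_eq_none_of_card_filter_eq_some p w hp, hp]

theorem card_filter_fiber_sizes_le [DecidableEq ι] [Fintype Λ] (κ : X → Option Λ) (w : Λ → ℕ) :
    #{v : ι → X | ∀ j, #{i | κ (v i) = some j} = w j} ≤
      #{x | κ x = none} ^ (Fintype.card ι - ∑ j, w j) *
        ∏ j, (Fintype.card ι).choose (w j) * #{x | κ x = some j} ^ w j := by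
  set labelings := ({p : ι → Option Λ | ∀ j, #{i | p i = some j} = w j} : Finset _)
  set A := #{x | κ x = none} ^ (Fintype.card ι - ∑ j, w j)
  set B := ∏ j, #{x | κ x = some j} ^ w j
  have hfiber : ∀ p ∈ labelings,
      #{v ∈ ({v : ι → X | ∀ j, #{i | κ (v i) = some j} = w j} : Finset _) | κ ∘ v = p} ≤
        A * B := by
    intro p hp
    rw [← prod_comp_eq_of_card_filter_eq (fun o => #{x | κ x = o}) p w (mem_filter.mp hp).2]
    rw [← card_filter_comp_eq_prod κ p]
    exact card_le_card fun v hv => by simp_all [funext_iff]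
  calc _ ≤ A * B * #labelings :=
        card_le_mul_card_image_of_maps_to (f := fun v : ι → X => κ ∘ v) (by simp [labelings]) _
          hfiber
    _ = A * (#labelings * B) := by ring
    _ ≤ A * ((∏ j, (Fintype.card ι).choose (w j)) * B) := by
      gcongr
      exact card_labelings_le_prod_choose (ι := ι) w
    _ = _ := by rw [prod_mul_distrib]

end LabelCounting

section Layers

variable {X : Type*} {s : ℕ → Set X} {L : ℕ}

theorem subset_of_forall_succ_subset (hs : ∀ j < L, s (j + 1) ⊆ s j) {j k : ℕ} (hjk : j ≤ k)
    (hkL : k ≤ L) : s k ⊆ s j := by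
  induction k, hjk using Nat.le_induction with
  | base => exact subset_rfl
  | succ k hjk ih => exact (hs k (by omega)).trans (ih (by omega))

theorem eq_of_mem_diff_succ (hs : ∀ j < L, s (j + 1) ⊆ s j) {x : X} {j k : ℕ} (hjL : j < L)
    (hkL : k < L) (hj : x ∈ s j \ s (j + 1)) (hk : x ∈ s k \ s (k + 1)) : j = k := by
  by_contra hne
  rcases Nat.lt_or_gt_of_ne hne with hjk | hkj
  · exact hj.2 (subset_of_forall_succ_subset hs hjk hkL.le hk.1)
  · exact hk.2 (subset_of_forall_succ_subset hs hkj hjL.le hj.1)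

noncomputable def layerIndex (s : ℕ → Set X) (L : ℕ) (x : X) : Option (Fin L) :=
  if h : ∃ j : Fin L, x ∈ s j \ s (j + 1) then some h.choose else none

theorem layerIndex_eq_some_iff (hs : ∀ j < L, s (j + 1) ⊆ s j) {x : X} {j : Fin L} :
    layerIndex s L x = some j ↔ x ∈ s j \ s (j + 1) := by
  unfold layerIndex
  split_ifs with h
  · refine ⟨fun hj => Option.some_injective _ hj ▸ h.choose_spec, fun hx => ?_⟩
    exact congrArg some (Fin.ext (eq_of_mem_diff_succ hs h.choose.2 j.2 h.choose_spec hx))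
  · exact ⟨nofun, fun hx => absurd ⟨j, hx⟩ h⟩

theorem mem_of_layerIndex_eq_none (h0 : s 0 = Set.univ) {x : X} (hx : layerIndex s L x = none) :
    x ∈ s L := by
  have hnot : ¬ ∃ j : Fin L, x ∈ s j \ s (j + 1) := fun h => by
    rw [layerIndex, dif_pos h] at hx
    cases hx
  suffices ∀ j ≤ L, x ∈ s j from this L le_rfl
  intro j hj
  induction j with
  | zero => simp [h0]
  | succ j ih => exact by_contra fun hxj => hnot ⟨⟨j, by omega⟩, ih (by omega), hxj⟩

end Layers

theorem card_filter_le_natCard {X : Type*} [Fintype X] {p : X → Prop} [DecidablePred p]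
    (S : Set X) (h : ∀ x, p x → x ∈ S) : #{x | p x} ≤ Nat.card S := by
  rw [Nat.card_eq_card_toFinset]
  exact card_le_card fun x hx => by simpa using h x (mem_filter.mp hx).2

theorem count_robust_homs_general (δ : ℝ) (a n : ℕ)
    {G : Type*} [AddCommGroup G] [Fintype G]
    (H : AddSubgroup G)
    (L : ℕ)
    (Gc : ℕ → AddSubgroup G) (hG0 : Gc 0 = ⊤) (hGL : Gc L = H)
    (hchain : ∀ j < L, Gc (j + 1) < Gc j)
    (w : ℕ → ℕ) :
    Set.ncard {F : (Fin n → ZMod a) →+ G |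
        (((Finset.univ.filter fun i : Fin n => F (Pi.single i 1) ∉ H).card : ℝ)
            ≤ (Nat.primeFactorsList H.index).length * (δ * n)) ∧
        (∀ H' : AddSubgroup G, H' < H →
          ¬ (((Finset.univ.filter fun i : Fin n => F (Pi.single i 1) ∉ H').card : ℝ)
            ≤ (Nat.primeFactorsList H'.index).length * (δ * n))) ∧
        (∀ j < L, (Finset.univ.filter fun i : Fin n =>
            F (Pi.single i 1) ∈ Gc j ∧ F (Pi.single i 1) ∉ Gc (j + 1)).card = w j)}
      ≤ Nat.card H ^ (n - ∑ j ∈ Finset.range L, w j) *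
          ∏ j ∈ Finset.range L, n.choose (w j) * Nat.card (Gc j) ^ (w j) := by
  have hs : ∀ j < L, (Gc (j + 1) : Set G) ⊆ Gc j := fun j hj => (hchain j hj).le
  set κ := layerIndex (fun j => (Gc j : Set G)) L
  have hκ : ∀ x (j : Fin L), κ x = some j ↔ x ∈ Gc j ∧ x ∉ Gc (j + 1) :=
    fun x j => layerIndex_eq_some_iff (s := fun j => (Gc j : Set G)) hs
  calc _ ≤ #{v : Fin n → G | ∀ j : Fin L, #{i | κ (v i) = some j} = w j} := by
        rw [← Set.ncard_coe_finset]
        refine Set.ncard_le_ncard_of_injOn (fun F i => F (Pi.single i 1)) ?_ ?_ (finite_toSet _)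
        · rintro F ⟨-, -, hF⟩
          simpa [hκ] using fun j : Fin L => hF j j.2
        · exact fun F _ F' _ h => AddMonoidHom.ext_zmod_pi_single fun i => congrFun h i
    _ ≤ #{x | κ x = none} ^ (n - ∑ j : Fin L, w j) *
          ∏ j : Fin L, n.choose (w j) * #{x | κ x = some j} ^ w j := by
        -- `convert` also reconciles the two decidability instances of `∀ j : Fin L`
        convert card_filter_fiber_sizes_le κ (fun j : Fin L => w j) using 3 <;>
          rw [Fintype.card_fin]
    _ ≤ _ := by
        rw [← Fin.sum_univ_eq_sum_range,
          ← Fin.prod_univ_eq_prod_range fun j => n.choose (w j) * Nat.card (Gc j) ^ w j]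
        gcongr with j
        · exact card_filter_le_natCard _ fun x hx =>
            hGL ▸ mem_of_layerIndex_eq_none (by simp [hG0]) hx
        · exact card_filter_le_natCard _ fun x hx => ((hκ x j).mp hx).1

/-- Count of robust homomorphisms for a subgroup `H` with prescribed layer counts: the number
of `F : (ℤ/aℤ)^n → G` that are `δ`-robust for `H` and have exactly `w j` indices `i` with
`F(v_i) ∈ G_j \ G_{j+1}` along a maximal chain `G = G_0 ⊃ G_1 ⊃ ⋯ ⊃ G_L = H` is at most
`|H|^{n - ∑ w_j} ∏_j C(n, w_j) |G_j|^{w_j}`. -/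
theorem count_robust_homs (δ : ℝ) (hδ : 0 < δ) (a n : ℕ) (ha : 0 < a) (hn : 0 < n)
    {G : Type*} [AddCommGroup G] [Fintype G] (hexp : ∀ g : G, a • g = 0)
    (H : AddSubgroup G) (hD : 1 < H.index)
    (L : ℕ) (hL : L = (Nat.primeFactorsList H.index).length)
    (Gc : ℕ → AddSubgroup G) (hG0 : Gc 0 = ⊤) (hGL : Gc L = H)
    (hchain : ∀ j < L, Gc (j + 1) < Gc j)
    (hmaximal : ∀ j < L, ((Gc (j + 1)).relIndex (Gc j)).Prime)
    (w : ℕ → ℕ) :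
    Set.ncard {F : (Fin n → ZMod a) →+ G |
        (((Finset.univ.filter fun i : Fin n => F (Pi.single i 1) ∉ H).card : ℝ)
            ≤ (Nat.primeFactorsList H.index).length * (δ * n)) ∧
        (∀ H' : AddSubgroup G, H' < H →
          ¬ (((Finset.univ.filter fun i : Fin n => F (Pi.single i 1) ∉ H').card : ℝ)
            ≤ (Nat.primeFactorsList H'.index).length * (δ * n))) ∧
        (∀ j < L, (Finset.univ.filter fun i : Fin n =>
            F (Pi.single i 1) ∈ Gc j ∧ F (Pi.single i 1) ∉ Gc (j + 1)).card = w j)}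
      ≤ Nat.card H ^ (n - ∑ j ∈ Finset.range L, w j) *
          ∏ j ∈ Finset.range L, n.choose (w j) * Nat.card (Gc j) ^ (w j) :=
  count_robust_homs_general δ a n H L Gc hG0 hGL hchain w
end

section
/- Let p be prime and suppose w = (w_1,...,w_n) ∈ (ℤ/pℤ)^n has no coordinate value occurring with multiplicity greater than n-m. Let X = (x_1,...,x_n) be a random vector of Laplacian type T_i: the coordinates x_j for j ≠ i are i.i.d. copies of a random variable ξ with max_{r∈ℤ/pℤ} P(ξ=r) ≤ 1-α, and x_i = -Σ_{j≠i} x_j. Then for every r ∈ ℤ/pℤ, |P(X·w = r) - 1/p| ≤ 2/√(αm), provided α ≥ 4/m. -/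
/-!
Substituting `x_{i₀} = -∑_{j ≠ i₀} x_j` turns `X·w` into `∑_{j ≠ i₀} x_j u_j` with
`u_j = w_j - w_{i₀}`, and the multiplicity hypothesis leaves at least `m` nonzero `u_j`.
Fourier inversion on `ℤ/pℤ` gives `|P(X·w = r) - 1/p| ≤ p⁻¹ ∑_{t ≠ 0} ∏_j |φ(t u_j)|`, where `φ` is
the characteristic function of `ξ`; AM–GM over `m` nonzero `u_j` and the substitution `s = t u_j`
bound this by `p⁻¹ ∑_{s ≠ 0} |φ(s)|^m`. Now `|φ(s)|² = 1 - E[1 - cos(2πs(ξ - ξ')/p)]` and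
`P(ξ ≠ ξ') ≥ α`, so `1 - y ≤ e^{-y}` and Jensen (conditioning on `ξ ≠ ξ'`) bound `|φ(s)|^m` by an
average of `exp(-(αm/2)(1 - cos(2πsd/p)))` over nonzero `d`. Jordan's inequality and a comparison
with the Gaussian integral bound each `∑_{s ≠ 0} exp(-(αm/2)(1 - cos(2πsd/p)))` by
`p √(π/(4αm)) ≤ 2p/√(αm)`.
-/

open MeasureTheory ProbabilityTheory Finset

lemma prod_le_sum_pow_card_div_card {ι : Type*} {s : Finset ι} (hs : s.Nonempty) {a : ι → ℝ}
    (ha : ∀ i ∈ s, 0 ≤ a i) : ∏ i ∈ s, a i ≤ (∑ i ∈ s, a i ^ #s) / #s := by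
  have hcard : (#s : ℝ) ≠ 0 := Nat.cast_ne_zero.2 hs.card_pos.ne'
  have amgm := Real.geom_mean_le_arith_mean_weighted s (fun _ => (#s : ℝ)⁻¹) (fun i => a i ^ #s)
    (fun _ _ => by positivity) (by rw [sum_const, nsmul_eq_mul, mul_inv_cancel₀ hcard])
    (fun i hi => pow_nonneg (ha i hi) _)
  rw [← mul_sum, inv_mul_eq_div] at amgm
  refine le_of_eq_of_le (prod_congr rfl fun i hi => ?_) amgm
  exact (Real.pow_rpow_inv_natCast (ha i hi) hs.card_pos.ne').symm

lemma sum_erase_zero_mul_right {G M : Type*} [GroupWithZero G] [Fintype G] [DecidableEq G]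
    [AddCommMonoid M] (g : G → M) {d : G} (hd : d ≠ 0) :
    ∑ t ∈ univ.erase 0, g (t * d) = ∑ s ∈ univ.erase 0, g s :=
  sum_equiv (Equiv.mulRight₀ d hd) (by simp [hd]) fun _ _ => rfl

lemma exp_neg_sum_mul_le {ι : Type*} {D : Finset ι} {W x : ι → ℝ} {α : ℝ} (hα : 0 < α)
    (hW : ∀ i ∈ D, 0 ≤ W i) (hx : ∀ i ∈ D, 0 ≤ x i) (hαW : α ≤ ∑ i ∈ D, W i) :
    Real.exp (-∑ i ∈ D, W i * x i)
      ≤ ∑ i ∈ D, W i / (∑ j ∈ D, W j) * Real.exp (-(α * x i)) := by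
  set S := ∑ j ∈ D, W j
  have hS : 0 < S := hα.trans_le hαW
  have hν : ∀ i ∈ D, 0 ≤ W i / S := fun i hi => div_nonneg (hW i hi) hS.le
  have hdiscount : α * ∑ i ∈ D, W i / S * x i ≤ ∑ i ∈ D, W i * x i := by
    have hT : 0 ≤ ∑ i ∈ D, W i * x i := sum_nonneg fun i hi => mul_nonneg (hW i hi) (hx i hi)
    simp only [div_mul_eq_mul_div, ← sum_div]
    rw [mul_div_assoc', div_le_iff₀ hS, mul_comm]
    exact mul_le_mul_of_nonneg_left hαW hT
  calc Real.exp (-∑ i ∈ D, W i * x i)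
      ≤ Real.exp (∑ i ∈ D, (W i / S) • -(α * x i)) := by
        gcongr
        simp only [smul_eq_mul, mul_neg, sum_neg_distrib, mul_left_comm _ α, ← mul_sum]
        linarith
    _ ≤ ∑ i ∈ D, (W i / S) • Real.exp (-(α * x i)) :=
        convexOn_exp.map_sum_le hν (by rw [← sum_div, div_self hS.ne']) fun _ _ => Set.mem_univ _

lemma sum_range_exp_neg_mul_sq_le {β : ℝ} (hβ : 0 < β) (K : ℕ) :
    ∑ i ∈ range K, Real.exp (-β * ((i : ℝ) + 1) ^ 2) ≤ √(Real.pi / β) / 2 := by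
  have hanti : AntitoneOn (fun x : ℝ => Real.exp (-β * x ^ 2)) (Set.Icc 0 (0 + K)) :=
    fun x hx y _ hxy => Real.exp_le_exp.2 <| by
      have : x ^ 2 ≤ y ^ 2 := pow_le_pow_left₀ hx.1 hxy 2
      nlinarith
  calc ∑ i ∈ range K, Real.exp (-β * ((i : ℝ) + 1) ^ 2)
      ≤ ∫ x in (0 : ℝ)..0 + K, Real.exp (-β * x ^ 2) := by
        simpa using hanti.sum_le_integral
    _ ≤ ∫ x in Set.Ioi (0 : ℝ), Real.exp (-β * x ^ 2) := by
        rw [zero_add, intervalIntegral.integral_of_le (Nat.cast_nonneg K)]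
        exact setIntegral_mono_set (by simpa using (integrable_exp_neg_mul_sq hβ).integrableOn)
          (.of_forall fun x => (Real.exp_pos _).le) (.of_forall fun x hx => hx.1)
    _ = √(Real.pi / β) / 2 := integral_gaussian_Ioi β

section ZMod

variable {p : ℕ} [NeZero p]

noncomputable def cosGap (x : ZMod p) : ℝ := 1 - (ZMod.stdAddChar x).re

lemma cosGap_eq (x : ZMod p) : cosGap x = 1 - Real.cos (2 * Real.pi * x.val / p) := by
  rw [cosGap, ZMod.stdAddChar_apply, ZMod.toCircle_apply, ← Complex.exp_ofReal_mul_I_re]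
  push_cast
  ring_nf

@[simp] lemma cosGap_zero : cosGap (0 : ZMod p) = 0 := by simp [cosGap]

lemma cosGap_nonneg (x : ZMod p) : 0 ≤ cosGap x := by
  have := (ZMod.stdAddChar x).re_le_norm
  rw [AddChar.norm_apply] at this
  rw [cosGap]; linarith

/-- Jordan's inequality `1 - cos θ ≥ 2θ²/π²` on `|θ| ≤ π`, applied at the representative of
`2πx/p` nearest to `0`. -/
lemma cosGap_ge (x : ZMod p) :
    8 * (x.val : ℝ) ^ 2 / p ^ 2 ≤ cosGap x ∨ 8 * ((-x).val : ℝ) ^ 2 / p ^ 2 ≤ cosGap x := by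
  have hp : (0 : ℝ) < p := Nat.cast_pos.2 (NeZero.pos p)
  have jordan : ∀ θ : ℝ, |θ| ≤ Real.pi → 2 / Real.pi ^ 2 * θ ^ 2 ≤ 1 - Real.cos θ :=
    fun θ hθ => by linarith [Real.cos_le_one_sub_mul_cos_sq hθ]
  rw [cosGap_eq]
  rcases le_or_gt (2 * x.val) p with h | h
  · left
    have hθ : |2 * Real.pi * x.val / p| ≤ Real.pi := by
      rw [abs_of_nonneg (by positivity), div_le_iff₀ hp]
      have : (2 * x.val : ℝ) ≤ p := by exact_mod_cast h
      nlinarith [Real.pi_pos]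
    convert jordan _ hθ using 1
    field_simp
    ring
  · right
    have hx : x ≠ 0 := by rintro rfl; simp at h
    have hneg : ((-x).val : ℝ) = p - x.val := by
      rw [ZMod.neg_val, if_neg hx, Nat.cast_sub (ZMod.val_lt x).le]
    have hθ : |2 * Real.pi * x.val / p - 2 * Real.pi| ≤ Real.pi := by
      have h1 : (p : ℝ) < 2 * x.val := by exact_mod_cast h
      have h2 : (x.val : ℝ) < p := by exact_mod_cast ZMod.val_lt x
      rw [abs_le, le_sub_iff_add_le, sub_le_iff_le_add, le_div_iff₀ hp, div_le_iff₀ hp]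
      constructor <;> nlinarith [Real.pi_pos]
    convert jordan _ hθ using 1
    · rw [hneg]
      field_simp
      ring
    · rw [Real.cos_sub_two_pi]

lemma sum_erase_zero_val_le {g : ℕ → ℝ} (hg : ∀ k, 0 ≤ g k) :
    ∑ s ∈ univ.erase (0 : ZMod p), g s.val ≤ ∑ i ∈ range p, g (i + 1) := by
  calc ∑ s ∈ univ.erase (0 : ZMod p), g s.val
      = ∑ k ∈ (univ.erase (0 : ZMod p)).image ZMod.val, g k :=
        (sum_image fun a _ b _ h => ZMod.val_injective p h).symm
    _ ≤ ∑ k ∈ (range p).image (· + 1), g k := by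
        refine sum_le_sum_of_subset_of_nonneg ?_ fun _ _ _ => hg _
        intro k hk
        obtain ⟨s, hs, rfl⟩ := mem_image.1 hk
        have h0 : s.val ≠ 0 := (ZMod.val_ne_zero s).2 (ne_of_mem_erase hs)
        exact mem_image.2 ⟨s.val - 1, mem_range.2 (by have := ZMod.val_lt s; omega), by omega⟩
    _ = ∑ i ∈ range p, g (i + 1) := sum_image fun a _ b _ h => Nat.succ_injective h

lemma sum_exp_neg_mul_cosGap_le {c : ℝ} (hc : 0 < c) :
    ∑ s ∈ univ.erase (0 : ZMod p), Real.exp (-(c * cosGap s)) ≤ p * √(Real.pi / (8 * c)) := by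
  have hp : (0 : ℝ) < p := Nat.cast_pos.2 (NeZero.pos p)
  set β : ℝ := 8 * c / p ^ 2
  have hβ : 0 < β := by positivity
  have hterm : ∀ s : ZMod p, Real.exp (-(c * cosGap s))
      ≤ Real.exp (-β * (s.val : ℝ) ^ 2) + Real.exp (-β * ((-s).val : ℝ) ^ 2) := by
    intro s
    have hle : ∀ k : ℕ, 8 * (k : ℝ) ^ 2 / p ^ 2 ≤ cosGap s →
        Real.exp (-(c * cosGap s)) ≤ Real.exp (-β * (k : ℝ) ^ 2) := fun k hk => by
      rw [Real.exp_le_exp, neg_mul, neg_le_neg_iff]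
      calc β * k ^ 2 = c * (8 * (k : ℝ) ^ 2 / p ^ 2) := by ring
        _ ≤ c * cosGap s := by gcongr
    rcases cosGap_ge s with h | h
    · linarith [hle _ h, Real.exp_pos (-β * ((-s).val : ℝ) ^ 2)]
    · linarith [hle _ h, Real.exp_pos (-β * (s.val : ℝ) ^ 2)]
  have hneg : ∑ s ∈ univ.erase (0 : ZMod p), Real.exp (-β * ((-s).val : ℝ) ^ 2)
      = ∑ s ∈ univ.erase (0 : ZMod p), Real.exp (-β * (s.val : ℝ) ^ 2) :=
    sum_equiv (Equiv.neg _) (by simp) fun _ _ => rfl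
  calc ∑ s ∈ univ.erase (0 : ZMod p), Real.exp (-(c * cosGap s))
      ≤ 2 * ∑ s ∈ univ.erase (0 : ZMod p), Real.exp (-β * (s.val : ℝ) ^ 2) := by
        rw [two_mul]
        nth_rewrite 2 [← hneg]
        rw [← sum_add_distrib]
        exact sum_le_sum fun s _ => hterm s
    _ ≤ 2 * ∑ i ∈ range p, Real.exp (-β * ((i : ℝ) + 1) ^ 2) := by
        have := sum_erase_zero_val_le (p := p) (g := fun k => Real.exp (-β * (k : ℝ) ^ 2))
          fun _ => (Real.exp_pos _).le
        push_cast at this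
        gcongr
    _ ≤ 2 * (√(Real.pi / β) / 2) := by gcongr; exact sum_range_exp_neg_mul_sq_le hβ p
    _ = p * √(Real.pi / (8 * c)) := by
        rw [show Real.pi / β = p ^ 2 * (Real.pi / (8 * c)) by simp only [β]; field_simp,
          Real.sqrt_mul (by positivity), Real.sqrt_sq hp.le]
        ring

noncomputable def charFunZMod (q : ZMod p → ℝ) (s : ZMod p) : ℂ :=
  ∑ c, (q c : ℂ) * ZMod.stdAddChar (s * c)

variable {ι : Type*} [Fintype ι] [DecidableEq ι]

noncomputable def probSumMulEq (q : ZMod p → ℝ) (u : ι → ZMod p) (r : ZMod p) : ℝ :=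
  ∑ v ∈ univ.filter (fun v : ι → ZMod p => ∑ j, v j * u j = r), ∏ j, q (v j)

variable {q : ZMod p → ℝ}

lemma charFunZMod_zero (hq : ∑ c, q c = 1) : charFunZMod q 0 = 1 := by
  simp [charFunZMod, ← Complex.ofReal_sum, hq]

lemma norm_charFunZMod_le_one (hq0 : ∀ c, 0 ≤ q c) (hq : ∑ c, q c = 1) (s : ZMod p) :
    ‖charFunZMod q s‖ ≤ 1 :=
  calc ‖charFunZMod q s‖ ≤ ∑ c, ‖(q c : ℂ) * ZMod.stdAddChar (s * c)‖ := norm_sum_le _ _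
    _ = 1 := by simp [Complex.norm_real, abs_of_nonneg (hq0 _), hq]

lemma norm_charFunZMod_sq (hq : ∑ c, q c = 1) (s : ZMod p) :
    ‖charFunZMod q s‖ ^ 2
      = 1 - ∑ cc ∈ univ.offDiag, q cc.1 * q cc.2 * cosGap (s * (cc.1 - cc.2)) := by
  have hsq : ‖charFunZMod q s‖ ^ 2 = (charFunZMod q s * starRingEnd ℂ (charFunZMod q s)).re := by
    rw [Complex.mul_conj, Complex.normSq_eq_norm_sq, Complex.ofReal_re]
  have hterm : ∀ c c' : ZMod p,
      ((q c : ℂ) * ZMod.stdAddChar (s * c) *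
          starRingEnd ℂ ((q c' : ℂ) * ZMod.stdAddChar (s * c'))).re
        = q c * q c' - q c * q c' * cosGap (s * (c - c')) := fun c c' => by
    rw [map_mul (starRingEnd ℂ), Complex.conj_ofReal, ← AddChar.map_neg_eq_conj,
      show (q c : ℂ) * ZMod.stdAddChar (s * c) * (q c' * ZMod.stdAddChar (-(s * c')))
          = ((q c * q c' : ℝ) : ℂ) * ZMod.stdAddChar (s * (c - c')) by
        rw [mul_sub, sub_eq_add_neg, AddChar.map_add_eq_mul]; push_cast; ring,
      Complex.re_ofReal_mul, cosGap]
    ring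
  have hdiag : ∑ cc ∈ univ.diag, q cc.1 * q cc.2 * cosGap (s * (cc.1 - cc.2)) = 0 :=
    sum_eq_zero fun cc hcc => by simp [(mem_diag.1 hcc).2]
  rw [hsq, charFunZMod, map_sum, sum_mul_sum, Complex.re_sum]
  simp only [Complex.re_sum, hterm, sum_sub_distrib, ← sum_mul_sum, hq, mul_one]
  rw [← sum_product' (f := fun c c' => q c * q c' * cosGap (s * (c - c'))),
    ← diag_union_offDiag, sum_union (disjoint_diag_offDiag _), hdiag, zero_add]

lemma le_sum_offDiag_mul (hq0 : ∀ c, 0 ≤ q c) (hq : ∑ c, q c = 1) {α : ℝ}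
    (hbal : ∀ c, q c ≤ 1 - α) : α ≤ ∑ cc ∈ univ.offDiag, q cc.1 * q cc.2 := by
  have hsplit := sum_union (disjoint_diag_offDiag (univ : Finset (ZMod p)))
    (f := fun cc => q cc.1 * q cc.2)
  rw [diag_union_offDiag, sum_product, ← sum_mul_sum, hq, one_mul, sum_diag] at hsplit
  have : ∑ c, q c * q c ≤ 1 - α :=
    calc ∑ c, q c * q c ≤ ∑ c, (1 - α) * q c :=
          sum_le_sum fun c _ => mul_le_mul_of_nonneg_right (hbal c) (hq0 c)
      _ = 1 - α := by rw [← mul_sum, hq, mul_one]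
  linarith

lemma norm_charFunZMod_pow_le (hq0 : ∀ c, 0 ≤ q c) (hq : ∑ c, q c = 1) {α : ℝ} (hα : 0 < α)
    (hbal : ∀ c, q c ≤ 1 - α) (m : ℕ) (s : ZMod p) :
    ‖charFunZMod q s‖ ^ m ≤ ∑ cc ∈ univ.offDiag,
      q cc.1 * q cc.2 / (∑ dd ∈ univ.offDiag, q dd.1 * q dd.2) *
        Real.exp (-(α * m / 2 * cosGap (s * (cc.1 - cc.2)))) := by
  set S := ∑ cc ∈ univ.offDiag, q cc.1 * q cc.2 * cosGap (s * (cc.1 - cc.2))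
  have hsq : ‖charFunZMod q s‖ ^ 2 ≤ Real.exp (-S / 2) ^ 2 := by
    rw [← Real.exp_nat_mul, norm_charFunZMod_sq hq, Nat.cast_two, mul_div_cancel₀ _ two_ne_zero]
    linarith [Real.add_one_le_exp (-S)]
  have hnorm : ‖charFunZMod q s‖ ≤ Real.exp (-S / 2) :=
    (pow_le_pow_iff_left₀ (norm_nonneg _) (Real.exp_nonneg _) two_ne_zero).1 hsq
  have hexp : m * (-S / 2)
      = -∑ cc ∈ univ.offDiag, q cc.1 * q cc.2 * (m / 2 * cosGap (s * (cc.1 - cc.2))) := by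
    simp only [S, neg_div, mul_neg, sum_div, mul_sum]
    exact congrArg _ (sum_congr rfl fun _ _ => by ring)
  calc ‖charFunZMod q s‖ ^ m ≤ Real.exp (-S / 2) ^ m := by gcongr
    _ = Real.exp
          (-∑ cc ∈ univ.offDiag, q cc.1 * q cc.2 * (m / 2 * cosGap (s * (cc.1 - cc.2)))) := by
        rw [← Real.exp_nat_mul, hexp]
    _ ≤ _ := (exp_neg_sum_mul_le hα (fun cc _ => mul_nonneg (hq0 _) (hq0 _))
        (fun cc _ => mul_nonneg (by positivity) (cosGap_nonneg _))
        (le_sum_offDiag_mul hq0 hq hbal)).trans_eq (by simp only [mul_div_assoc, mul_assoc])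

lemma natCast_mul_probSumMulEq (u : ι → ZMod p) (r : ZMod p) :
    (p : ℂ) * probSumMulEq q u r
      = ∑ t, ZMod.stdAddChar (-(t * r)) * ∏ j, charFunZMod q (t * u j) := by
  have hmap : ∀ f : ι → ZMod p, ZMod.stdAddChar (∑ j, f j) = ∏ j, ZMod.stdAddChar (f j) :=
    fun f => congrArg Additive.toMul (map_sum ZMod.stdAddChar.toAddMonoidHom f univ)
  have hprod : ∀ t, ∏ j, charFunZMod q (t * u j) = ∑ v : ι → ZMod p,
      (∏ j, (q (v j) : ℂ)) * ZMod.stdAddChar (t * ∑ j, v j * u j) := fun t => by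
    simp only [charFunZMod, prod_univ_sum, Fintype.piFinset_univ, prod_mul_distrib]
    refine sum_congr rfl fun v _ => congrArg _ ?_
    rw [mul_sum, hmap]
    exact prod_congr rfl fun j _ => congrArg _ (by ring)
  have horth : ∀ x : ZMod p, ∑ t, ZMod.stdAddChar (t * x) = if x = 0 then (p : ℂ) else 0 :=
    fun x => by
      rw [AddChar.sum_mulShift x (ZMod.isPrimitive_stdAddChar p), ZMod.card, Nat.cast_ite,
        Nat.cast_zero]
  calc (p : ℂ) * probSumMulEq q u r
      = ∑ v : ι → ZMod p, (∏ j, (q (v j) : ℂ)) *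
          ∑ t, ZMod.stdAddChar (t * (∑ j, v j * u j - r)) := by
        simp only [horth, sub_eq_zero, probSumMulEq, sum_filter]
        push_cast
        rw [mul_sum]
        exact sum_congr rfl fun v _ => by split_ifs <;> push_cast <;> ring
    _ = ∑ t, ∑ v : ι → ZMod p, ZMod.stdAddChar (-(t * r)) *
          ((∏ j, (q (v j) : ℂ)) * ZMod.stdAddChar (t * ∑ j, v j * u j)) := by
        rw [sum_comm]
        refine sum_congr rfl fun v _ => ?_
        rw [mul_sum]
        refine sum_congr rfl fun t _ => ?_
        rw [mul_sub, sub_eq_neg_add, AddChar.map_add_eq_mul]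
        ring
    _ = ∑ t, ZMod.stdAddChar (-(t * r)) * ∏ j, charFunZMod q (t * u j) := by
        simp only [hprod, mul_sum]

lemma abs_probSumMulEq_sub_inv_le (hq : ∑ c, q c = 1) (u : ι → ZMod p) (r : ZMod p) :
    |probSumMulEq q u r - 1 / p|
      ≤ (∑ t ∈ univ.erase 0, ∏ j, ‖charFunZMod q (t * u j)‖) / p := by
  have hp : (0 : ℝ) < p := Nat.cast_pos.2 (NeZero.pos p)
  have hsplit : ((p * (probSumMulEq q u r - 1 / p) : ℝ) : ℂ)
      = ∑ t ∈ univ.erase 0, ZMod.stdAddChar (-(t * r)) * ∏ j, charFunZMod q (t * u j) := by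
    push_cast
    rw [mul_sub, natCast_mul_probSumMulEq, ← sum_erase_add _ _ (mem_univ 0)]
    simp [charFunZMod_zero hq]
  have hnorm : |probSumMulEq q u r - 1 / p| * p
      = ‖((p * (probSumMulEq q u r - 1 / p) : ℝ) : ℂ)‖ := by
    rw [Complex.norm_real, Real.norm_eq_abs, abs_mul, abs_of_pos hp, mul_comm]
  rw [le_div_iff₀ hp, hnorm, hsplit]
  refine (norm_sum_le _ _).trans (sum_le_sum fun t _ => ?_)
  simp [norm_prod]

end ZMod

section Prime

variable {p : ℕ} [Fact p.Prime] {q : ZMod p → ℝ}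

lemma sum_prod_norm_charFunZMod_le (hq0 : ∀ c, 0 ≤ q c) (hq : ∑ c, q c = 1) {ι : Type*}
    [Fintype ι] {u : ι → ZMod p} {T : Finset ι} (hT : T.Nonempty) (hu : ∀ j ∈ T, u j ≠ 0) :
    ∑ t ∈ univ.erase (0 : ZMod p), ∏ j, ‖charFunZMod q (t * u j)‖
      ≤ ∑ s ∈ univ.erase 0, ‖charFunZMod q s‖ ^ #T := by
  have hbound : ∀ t, ∏ j, ‖charFunZMod q (t * u j)‖
      ≤ (∑ j ∈ T, ‖charFunZMod q (t * u j)‖ ^ #T) / #T := fun t =>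
    (prod_le_prod_of_subset_of_le_one (subset_univ T) (fun _ _ => norm_nonneg _)
      fun _ _ _ => norm_charFunZMod_le_one hq0 hq _).trans
    (prod_le_sum_pow_card_div_card hT fun _ _ => norm_nonneg _)
  refine (sum_le_sum fun t _ => hbound t).trans_eq ?_
  rw [← sum_div, sum_comm, sum_congr rfl fun j hj =>
    sum_erase_zero_mul_right (fun s => ‖charFunZMod q s‖ ^ #T) (hu j hj), sum_const,
    nsmul_eq_mul, mul_div_cancel_left₀ _ (Nat.cast_ne_zero.2 hT.card_pos.ne')]

lemma sum_norm_charFunZMod_pow_le (hq0 : ∀ c, 0 ≤ q c) (hq : ∑ c, q c = 1) {α : ℝ}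
    (hα : 0 < α) (hbal : ∀ c, q c ≤ 1 - α) (m : ℕ) :
    ∑ s ∈ univ.erase 0, ‖charFunZMod q s‖ ^ m
      ≤ ∑ s ∈ univ.erase (0 : ZMod p), Real.exp (-(α * m / 2 * cosGap s)) := by
  set W := ∑ dd ∈ univ.offDiag, q dd.1 * q dd.2
  have hW : 0 < W := hα.trans_le (le_sum_offDiag_mul hq0 hq hbal)
  set E := fun s : ZMod p => Real.exp (-(α * m / 2 * cosGap s))
  calc ∑ s ∈ univ.erase 0, ‖charFunZMod q s‖ ^ m
      ≤ ∑ s ∈ univ.erase 0, ∑ cc ∈ univ.offDiag, q cc.1 * q cc.2 / W * E (s * (cc.1 - cc.2)) :=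
        sum_le_sum fun s _ => norm_charFunZMod_pow_le hq0 hq hα hbal m s
    _ = ∑ cc ∈ univ.offDiag, q cc.1 * q cc.2 / W * ∑ s ∈ univ.erase 0, E s := by
        rw [sum_comm]
        refine sum_congr rfl fun cc hcc => ?_
        rw [← mul_sum, sum_erase_zero_mul_right E (sub_ne_zero.2 (mem_offDiag.1 hcc).2.2)]
    _ = ∑ s ∈ univ.erase 0, E s := by rw [← sum_mul, ← sum_div, div_self hW.ne', one_mul]

theorem abs_probSumMulEq_sub_inv_le_two_div_sqrt (hq0 : ∀ c, 0 ≤ q c) (hq : ∑ c, q c = 1)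
    {α : ℝ} (hα : 0 < α) (hbal : ∀ c, q c ≤ 1 - α) {m : ℕ} (hm : 0 < m) {ι : Type*} [Fintype ι]
    [DecidableEq ι] {u : ι → ZMod p} (hu : m ≤ #{j | u j ≠ 0}) (r : ZMod p) :
    |probSumMulEq q u r - 1 / p| ≤ 2 / √(α * m) := by
  obtain ⟨T, hTu, hTm⟩ := exists_subset_card_eq hu
  have hT : T.Nonempty := card_pos.1 (hTm ▸ hm)
  have hp : (0 : ℝ) < p := Nat.cast_pos.2 (Fact.out : p.Prime).pos
  have hαm : 0 < α * m := by positivity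
  calc |probSumMulEq q u r - 1 / p|
      ≤ (∑ s ∈ univ.erase 0, Real.exp (-(α * m / 2 * cosGap s))) / p := by
        refine (abs_probSumMulEq_sub_inv_le hq u r).trans (div_le_div_of_nonneg_right ?_ hp.le)
        rw [← hTm]
        exact (sum_prod_norm_charFunZMod_le hq0 hq hT fun j hj => (mem_filter.1 (hTu hj)).2).trans
          (sum_norm_charFunZMod_pow_le hq0 hq hα hbal #T)
    _ ≤ √(Real.pi / (8 * (α * m / 2))) := by
        rw [div_le_iff₀' hp]
        exact sum_exp_neg_mul_cosGap_le (by positivity)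
    _ ≤ √(4 / (α * m)) := by
        refine Real.sqrt_le_sqrt ?_
        rw [div_le_div_iff₀ (by positivity) hαm]
        nlinarith [Real.pi_le_four]
    _ = 2 / √(α * m) := by
        rw [Real.sqrt_div' _ hαm.le, show (4 : ℝ) = 2 ^ 2 by norm_num, Real.sqrt_sq zero_le_two]

end Prime

section Probability

variable {Ω : Type*} [MeasurableSpace Ω] {μ : Measure Ω} [IsProbabilityMeasure μ]
  {α : Type*} [MeasurableSpace α] [MeasurableSingletonClass α]

lemma sum_measureReal_preimage_singleton_eq_one [Fintype α] {f : Ω → α} (hf : Measurable f) :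
    ∑ c, μ.real (f ⁻¹' {c}) = 1 := by
  rw [sum_measureReal_preimage_singleton _ fun c _ => hf (measurableSet_singleton c), coe_univ,
    Set.preimage_univ, probReal_univ]

lemma measureReal_mem_eq_sum_prod_of_iIndepFun {ι : Type*} [Fintype ι] [DecidableEq ι]
    {Y : ι → Ω → α} (hY : ∀ i, Measurable (Y i)) (hindep : iIndepFun Y μ) (S : Finset (ι → α)) :
    μ.real {ω | (fun i => Y i ω) ∈ S} = ∑ v ∈ S, ∏ i, μ.real (Y i ⁻¹' {v i}) := by
  have hmeas : Measurable fun ω i => Y i ω := measurable_pi_lambda _ hY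
  refine (sum_measureReal_preimage_singleton S fun v _ => hmeas (measurableSet_singleton v)).symm
    |>.trans (sum_congr rfl fun v _ => ?_)
  rw [measureReal_def, ← Measure.map_apply hmeas (measurableSet_singleton v),
    (iIndepFun_iff_map_fun_eq_pi_map fun i => (hY i).aemeasurable).1 hindep,
    Measure.pi_singleton, ENNReal.toReal_prod]
  simp [Measure.map_apply (hY _) (measurableSet_singleton _), measureReal_def]

end Probability

lemma sum_mul_eq_sum_ne_mul_sub {R ι : Type*} [CommRing R] [Fintype ι] [DecidableEq ι]
    {x : ι → R} {i₀ : ι} (hx : x i₀ = -∑ j ∈ univ.erase i₀, x j) (w : ι → R) :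
    ∑ j, x j * w j = ∑ j : {j // j ≠ i₀}, x j * (w j - w i₀) := by
  rw [← add_sum_erase _ _ (mem_univ i₀), hx,
    ← sum_subtype (univ.erase i₀) (fun j => by simp) fun j => x j * (w j - w i₀)]
  simp only [mul_sub, sum_sub_distrib, ← sum_mul]
  ring

lemma le_card_filter_ne {ι α : Type*} [Fintype ι] [DecidableEq ι] [DecidableEq α] {w : ι → α}
    {m : ℕ} (hw : ∀ c, Set.ncard {j | w j = c} ≤ Fintype.card ι - m) (i₀ : ι) :
    m ≤ #{j : {j // j ≠ i₀} | w j ≠ w i₀} := by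
  have hsub : #{j : {j // j ≠ i₀} | w j ≠ w i₀} = #{j | w j ≠ w i₀} :=
    card_bij (fun j _ => j.1) (fun j hj => by simpa using hj) (fun _ _ _ _ => Subtype.ext)
      fun j hj => ⟨⟨j, fun h => (mem_filter.1 hj).2 (h ▸ rfl)⟩, by simpa using hj, rfl⟩
  have hsplit := card_filter_add_card_filter_not (s := univ) fun j => w j = w i₀
  have hself : 0 < #{j | w j = w i₀} := card_pos.2 ⟨i₀, by simp⟩
  have hle := hw (w i₀)
  rw [← coe_filter_univ, Set.ncard_coe_finset] at hle
  rw [hsub, card_univ] at *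
  simp only [ne_eq] at *
  omega

theorem forward_erdos_littlewood_offord_laplacian_general {Ω : Type*} [MeasureSpace Ω]
    [IsProbabilityMeasure (ℙ : Measure Ω)]
    (p : ℕ) [Fact p.Prime]
    [MeasurableSpace (ZMod p)] [MeasurableSingletonClass (ZMod p)]
    (n m : ℕ) (hm : 0 < m)
    (α : ℝ) (hα0 : 0 < α) (hα1 : α ≤ 1)
    (i₀ : Fin n)
    (X : Ω → Fin n → ZMod p)
    (hsum : ∀ ω, X ω i₀ = -∑ j ∈ Finset.univ.erase i₀, X ω j)
    (hmeas : ∀ j, Measurable fun ω => X ω j)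
    (hindep : iIndepFun
      (fun j : {j : Fin n // j ≠ i₀} => fun ω => X ω j) ℙ)
    (hident : ∀ j j' : {j : Fin n // j ≠ i₀},
      Measure.map (fun ω => X ω j) ℙ = Measure.map (fun ω => X ω j') ℙ)
    (hbal : ∀ j : Fin n, j ≠ i₀ → ∀ r : ZMod p,
      ℙ {ω | X ω j = r} ≤ ENNReal.ofReal (1 - α))
    (w : Fin n → ZMod p)
    (hmult : ∀ c : ZMod p, Set.ncard {j | w j = c} ≤ n - m) :
    ∀ r : ZMod p, |(ℙ {ω | ∑ j, X ω j * w j = r}).toReal - 1 / p|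
      ≤ 2 / Real.sqrt (α * m) := by
  intro r
  set u : {j : Fin n // j ≠ i₀} → ZMod p := fun j => w j - w i₀
  have hu : m ≤ #{j | u j ≠ 0} := by
    simpa only [u, sub_ne_zero] using le_card_filter_ne (by simpa using hmult) i₀
  obtain ⟨j₁, -⟩ := card_pos.1 (hm.trans_le hu)
  set q : ZMod p → ℝ := fun c => (ℙ : Measure Ω).real ((X · j₁) ⁻¹' {c})
  have hlaw : ∀ (j : {j : Fin n // j ≠ i₀}) c, (ℙ : Measure Ω).real ((X · j) ⁻¹' {c}) = q c :=
    fun j c => by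
      simp only [q, measureReal_def, ← Measure.map_apply (hmeas _) (measurableSet_singleton c),
        hident j j₁]
  have hprob : (ℙ {ω | ∑ j, X ω j * w j = r}).toReal = probSumMulEq q u r :=
    calc (ℙ {ω | ∑ j, X ω j * w j = r}).toReal
        = (ℙ : Measure Ω).real {ω | (fun j : {j // j ≠ i₀} => X ω j) ∈
            univ.filter fun v => ∑ j, v j * u j = r} := by
          simp [measureReal_def, sum_mul_eq_sum_ne_mul_sub (hsum _), u]
      _ = probSumMulEq q u r := by
          rw [measureReal_mem_eq_sum_prod_of_iIndepFun (fun j : {j // j ≠ i₀} => hmeas j) hindep]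
          simp only [hlaw, probSumMulEq]
  rw [hprob]
  refine abs_probSumMulEq_sub_inv_le_two_div_sqrt (fun c => measureReal_nonneg)
    (sum_measureReal_preimage_singleton_eq_one (hmeas j₁)) hα0 (fun c => ?_) hm hu r
  exact ENNReal.toReal_le_of_le_ofReal (sub_nonneg.2 hα1) (hbal j₁ j₁.2 c)

/-- Forward Erdős–Littlewood–Offord for the Laplacian: if `w ∈ (ℤ/pℤ)^n` has no coordinate
value of multiplicity exceeding `n - m`, and `X` is of type `T_{i₀}` (the entries away from
`i₀` are i.i.d. `α`-balanced, and the `i₀`-entry is minus their sum), then for every `r`,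
`|P(X·w = r) - 1/p| ≤ 2/√(αm)` provided `α ≥ 4/m`. -/
theorem forward_erdos_littlewood_offord_laplacian {Ω : Type*} [MeasureSpace Ω]
    [IsProbabilityMeasure (ℙ : Measure Ω)]
    (p : ℕ) [Fact p.Prime]
    [MeasurableSpace (ZMod p)] [MeasurableSingletonClass (ZMod p)]
    (n m : ℕ) (hm : 0 < m) (hmn : m ≤ n)
    (α : ℝ) (hα0 : 0 < α) (hα1 : α ≤ 1) (hαm : 4 / (m : ℝ) ≤ α)
    (i₀ : Fin n)
    (X : Ω → Fin n → ZMod p)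
    (hsum : ∀ ω, X ω i₀ = -∑ j ∈ Finset.univ.erase i₀, X ω j)
    (hmeas : ∀ j, Measurable fun ω => X ω j)
    (hindep : iIndepFun
      (fun j : {j : Fin n // j ≠ i₀} => fun ω => X ω j) ℙ)
    (hident : ∀ j j' : {j : Fin n // j ≠ i₀},
      Measure.map (fun ω => X ω j) ℙ = Measure.map (fun ω => X ω j') ℙ)
    (hbal : ∀ j : Fin n, j ≠ i₀ → ∀ r : ZMod p,
      ℙ {ω | X ω j = r} ≤ ENNReal.ofReal (1 - α))
    (w : Fin n → ZMod p)
    (hmult : ∀ c : ZMod p, Set.ncard {j | w j = c} ≤ n - m) :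
    ∀ r : ZMod p, |(ℙ {ω | ∑ j, X ω j * w j = r}).toReal - 1 / p|
      ≤ 2 / Real.sqrt (α * m) :=
  forward_erdos_littlewood_offord_laplacian_general p n m hm α hα0 hα1 i₀ X hsum hmeas hindep hident
    hbal w hmult
end

section
/- Let W be a subspace of (ℤ/pℤ)^n contained in the set of vectors with zero coordinate sum, and suppose that every non-zero vector normal to W has support size greater than δn. Then W has no non-zero normal vector with some coordinate value of multiplicity between n - δn and n - 1. -/
open Finset

section ShiftedNormal

variable {ι R : Type*} [Fintype ι]

theorem sum_sub_const_mul [CommRing R] (u x : ι → R) (c : R) :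
    ∑ i, (u i - c) * x i = ∑ i, u i * x i - c * ∑ i, x i := by
  simp only [sub_mul, sum_sub_distrib, mul_sum]

theorem ncard_ne_add_ncard_eq (u : ι → R) (c : R) :
    {i | u i ≠ c}.ncard + {i | u i = c}.ncard = Fintype.card ι := by
  rw [add_comm, ← Set.compl_ofPred, Set.ncard_add_ncard_compl, Nat.card_eq_fintype_card]

theorem sub_const_ne_zero_of_ncard_lt [AddGroup R] {u : ι → R} {c : R}
    (h : {i | u i = c}.ncard < Fintype.card ι) : (fun i => u i - c) ≠ 0 := by
  intro hzero
  have hempty : {i | u i ≠ c} = ∅ :=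
    Set.eq_empty_of_forall_notMem fun i hi => hi (sub_eq_zero.mp (congrFun hzero i))
  have := ncard_ne_add_ncard_eq u c
  rw [hempty, Set.ncard_empty] at this
  omega

end ShiftedNormal

theorem no_high_multiplicity_normal_vector_general (p : ℕ) (n : ℕ) (δ : ℝ)
    (W : Submodule (ZMod p) (Fin n → ZMod p))
    (hzero : ∀ x ∈ W, ∑ i, x i = 0)
    (hsparse : ∀ u : Fin n → ZMod p, u ≠ 0 →
      (∀ x ∈ W, ∑ i, u i * x i = 0) → δ * n < (Set.ncard {i | u i ≠ 0} : ℝ)) :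
    ∀ u : Fin n → ZMod p, u ≠ 0 → (∀ x ∈ W, ∑ i, u i * x i = 0) →
      ∀ c : ZMod p, ¬ ((n : ℝ) - δ * n ≤ (Set.ncard {i | u i = c} : ℝ) ∧
        Set.ncard {i | u i = c} ≤ n - 1) := by
  rintro u hu hnorm c ⟨hlow, hhigh⟩
  have hn : 0 < n := Nat.pos_of_ne_zero <| by rintro rfl; exact hu (Subsingleton.elim _ _)
  have hcount := ncard_ne_add_ncard_eq u c
  rw [Fintype.card_fin] at hcount
  have hshift_ne : (fun i => u i - c) ≠ 0 :=
    sub_const_ne_zero_of_ncard_lt (by rw [Fintype.card_fin]; omega)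
  have hshift_normal : ∀ x ∈ W, ∑ i, (u i - c) * x i = 0 := fun x hx => by
    rw [sum_sub_const_mul, hnorm x hx, hzero x hx, mul_zero, sub_zero]
  have hsupport := hsparse _ hshift_ne hshift_normal
  simp only [sub_ne_zero] at hsupport
  have : ({i | u i ≠ c}.ncard : ℝ) + {i | u i = c}.ncard = n := by exact_mod_cast hcount
  linarith

/-- If every non-zero normal vector of a zero-sum subspace `W ⊆ (ℤ/pℤ)^n` has support size
greater than `δn`, then `W` has no non-zero normal vector having some coordinate value of
multiplicity between `n - δn` and `n - 1`. -/
theorem no_high_multiplicity_normal_vector (p : ℕ) [Fact p.Prime] (n : ℕ) (δ : ℝ)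
    (hδ : 0 < δ)
    (W : Submodule (ZMod p) (Fin n → ZMod p))
    (hzero : ∀ x ∈ W, ∑ i, x i = 0)
    (hsparse : ∀ u : Fin n → ZMod p, u ≠ 0 →
      (∀ x ∈ W, ∑ i, u i * x i = 0) → δ * n < (Set.ncard {i | u i ≠ 0} : ℝ)) :
    ∀ u : Fin n → ZMod p, u ≠ 0 → (∀ x ∈ W, ∑ i, u i * x i = 0) →
      ∀ c : ZMod p, ¬ ((n : ℝ) - δ * n ≤ (Set.ncard {i | u i = c} : ℝ) ∧
        Set.ncard {i | u i = c} ≤ n - 1) :=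
  no_high_multiplicity_normal_vector_general p n δ W hzero hsparse
end

section
/- Let P = { Σ_{i=1}^r x_i a_i : |x_i| ≤ N_i, x_i ∈ ℤ } be a symmetric generalized arithmetic progression in an abelian group G which is 2-proper (i.e., the representation of 2P = { Σ x_i a_i : |x_i| ≤ 2N_i } is one-to-one). Let X ⊆ G be a finite set with 0 ∈ X, let k = 2^l be a power of two, and suppose the k-fold sumset kX is contained in P. Then X ⊆ { Σ_{i=1}^r x_i a_i : |x_i| ≤ 2N_i/k }. -/
/-! Write `g = ∑ xᵢaᵢ` with `|xᵢ| ≤ Nᵢ`, which is possible since `g = g + 0 + ⋯ + 0 ∈ kX ⊆ P`.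
Since `0 ∈ X`, every `2ʲ • g` with `2ʲ ≤ k` lies in `kX ⊆ P`. If `|2ʲxᵢ| ≤ Nᵢ`, then both
`2ʲ⁺¹x` and the representation of `2ʲ⁺¹ • g` in `P` lie in the box of radius `2N`, so by
`2`-properness they coincide and `|2ʲ⁺¹xᵢ| ≤ Nᵢ`. Hence `|2ˡxᵢ| ≤ Nᵢ`, i.e. `|xᵢ| ≤ Nᵢ/k`. -/

open Finset

theorem exists_sum_fin_eq_nsmul {G : Type*} [AddCommMonoid G] {X : Set G} {g : G} {m k : ℕ}
    (h0 : (0 : G) ∈ X) (hg : g ∈ X) (hm : m ≤ k) :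
    ∃ f : Fin k → G, (∀ j, f j ∈ X) ∧ m • g = ∑ j, f j := by
  refine ⟨fun j => if (j : ℕ) < m then g else 0, fun j => ?_, ?_⟩
  · dsimp only
    split_ifs
    exacts [hg, h0]
  · rw [sum_ite, sum_const, sum_const_zero, add_zero, Fin.card_filter_val_lt, min_eq_right hm]

section SymmGAP

variable {G ι : Type*} [AddCommGroup G] [Fintype ι]

def symmGAP (a : ι → G) (N : ι → ℤ) : Set G :=
  {g | ∃ x : ι → ℤ, (∀ i, |x i| ≤ N i) ∧ g = ∑ i, x i • a i}

theorem abs_two_mul_le_of_injOn {a : ι → G} {N : ι → ℤ}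
    (hinj : Set.InjOn (fun x : ι → ℤ => ∑ i, x i • a i) {x | ∀ i, |x i| ≤ 2 * N i})
    {x : ι → ℤ} (hx : ∀ i, |x i| ≤ N i) (hmem : (2 : ℤ) • ∑ i, x i • a i ∈ symmGAP a N) (i : ι) :
    |2 * x i| ≤ N i := by
  obtain ⟨y, hy, hxy⟩ := hmem
  have hdouble : (fun i => 2 * x i) = y := by
    refine hinj (fun i => ?_) (fun i => (hy i).trans ?_) ?_
    · rw [abs_mul, abs_two]
      exact mul_le_mul_of_nonneg_left (hx i) zero_le_two
    · linarith [(abs_nonneg (y i)).trans (hy i)]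
    · simpa only [smul_sum, mul_smul] using hxy
  rw [congrFun hdouble i]
  exact hy i

theorem abs_two_pow_mul_le_of_injOn {a : ι → G} {N : ι → ℤ}
    (hinj : Set.InjOn (fun x : ι → ℤ => ∑ i, x i • a i) {x | ∀ i, |x i| ≤ 2 * N i})
    {x : ι → ℤ} (hx : ∀ i, |x i| ≤ N i) {l : ℕ}
    (hmem : ∀ j ≤ l, (2 : ℤ) ^ j • ∑ i, x i • a i ∈ symmGAP a N) (i : ι) :
    |2 ^ l * x i| ≤ N i := by
  induction l generalizing i with
  | zero => simpa using hx i
  | succ l ih =>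
    have hmem' := hmem (l + 1) le_rfl
    rw [pow_succ', mul_smul, smul_sum] at hmem'
    simp only [smul_smul] at hmem'
    simpa only [pow_succ', mul_assoc] using
      abs_two_mul_le_of_injOn hinj (ih fun j hj => hmem j hj.step) hmem' i

end SymmGAP

theorem gap_dividing_trick_general {G : Type*} [AddCommGroup G]
    (r : ℕ) (a : Fin r → G) (N : Fin r → ℕ)
    (h2proper : ∀ x y : Fin r → ℤ, (∀ i, |x i| ≤ 2 * (N i : ℤ)) →
      (∀ i, |y i| ≤ 2 * (N i : ℤ)) → ∑ i, x i • a i = ∑ i, y i • a i → x = y)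
    (X : Set G) (h0 : (0 : G) ∈ X)
    (l : ℕ) (k : ℕ) (hk : k = 2 ^ l)
    (hsum : {g : G | ∃ f : Fin k → G, (∀ j, f j ∈ X) ∧ g = ∑ j, f j} ⊆
      {g : G | ∃ x : Fin r → ℤ, (∀ i, |x i| ≤ (N i : ℤ)) ∧ g = ∑ i, x i • a i}) :
    X ⊆ {g : G | ∃ x : Fin r → ℤ, (∀ i, (|x i| : ℝ) ≤ 2 * (N i : ℝ) / k) ∧
      g = ∑ i, x i • a i} := by
  intro g hg
  have hmem : ∀ m ≤ k, m • g ∈ symmGAP a (fun i => (N i : ℤ)) := fun m hm =>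
    hsum (exists_sum_fin_eq_nsmul h0 hg hm)
  obtain ⟨x, hx, rfl⟩ := one_smul ℕ g ▸ hmem 1 (hk ▸ Nat.one_le_two_pow)
  refine ⟨x, fun i => ?_, rfl⟩
  have hpow : |2 ^ l * x i| ≤ (N i : ℤ) :=
    abs_two_pow_mul_le_of_injOn (fun x hx y hy h => h2proper x y hx hy h) hx (fun j hj => by
      exact_mod_cast hmem (2 ^ j) (hk ▸ Nat.pow_le_pow_right two_pos hj)) i
  have hpowℝ : (2 : ℝ) ^ l * |(x i : ℝ)| ≤ N i := by
    rw [abs_mul, abs_pow, abs_two] at hpow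
    exact_mod_cast hpow
  rw [hk, Nat.cast_pow, Nat.cast_two, le_div_iff₀ (by positivity)]
  nlinarith [abs_nonneg (x i : ℝ), (N i).cast_nonneg (α := ℝ)]

/-- Dividing trick for GAPs: if `P = {∑ xᵢaᵢ : |xᵢ| ≤ Nᵢ}` is a `2`-proper symmetric GAP,
`0 ∈ X`, `k = 2^l`, and the `k`-fold sumset `kX` is contained in `P`, then
`X ⊆ {∑ xᵢaᵢ : |xᵢ| ≤ 2Nᵢ/k}`. -/
theorem gap_dividing_trick {G : Type*} [AddCommGroup G]
    (r : ℕ) (a : Fin r → G) (N : Fin r → ℕ) (hN : ∀ i, 0 < N i)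
    (h2proper : ∀ x y : Fin r → ℤ, (∀ i, |x i| ≤ 2 * (N i : ℤ)) →
      (∀ i, |y i| ≤ 2 * (N i : ℤ)) → ∑ i, x i • a i = ∑ i, y i • a i → x = y)
    (X : Set G) (hX : X.Finite) (h0 : (0 : G) ∈ X)
    (l : ℕ) (k : ℕ) (hk : k = 2 ^ l)
    (hsum : {g : G | ∃ f : Fin k → G, (∀ j, f j ∈ X) ∧ g = ∑ j, f j} ⊆
      {g : G | ∃ x : Fin r → ℤ, (∀ i, |x i| ≤ (N i : ℤ)) ∧ g = ∑ i, x i • a i}) :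
    X ⊆ {g : G | ∃ x : Fin r → ℤ, (∀ i, (|x i| : ℝ) ≤ 2 * (N i : ℝ) / k) ∧
      g = ∑ i, x i • a i} :=
  gap_dividing_trick_general r a N h2proper X h0 l k hk hsum
end

section
/- Let A_3 > 0 and 0 < a_1 < 1. Then for all a_4 > 0 sufficiently small (depending on A_3, a_1), the following holds: for every Δ' > 2/(1-a_1) and all n sufficiently large (depending on A_3, a_1, a_4, Δ'), Σ_{k=1}^{⌊a_4 n⌋} C(n,k) A_3^k ( a_1 + (1-a_1) exp(-(Δ' log n / n) k) )^n ≤ 3 n^{-((1-a_1)Δ'/2 - 1)}. -/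
open Real Filter Finset

/-!
Put `κ = (1 - a₁) (1 - e⁻¹)` and `ε = (1 - a₁) Δ' / 2 - 1`. From `1 - e^{-x} ≥ (1 - e⁻¹) min x 1`
(concavity) the `k`-th base satisfies `(a₁ + (1 - a₁) e^{-x})^n ≤ e^{-κ n min x 1}` with
`x = k Δ' log n / n`. If `x ≤ 1` this gives `n^{-κ Δ' k}`, and with `C(n,k) ≤ n^k` the summand is
at most `r^k` for `r = A₃ n^{1 - κ Δ'}`; since `1 - e⁻¹ > 1/2`, `r = o(n^{-ε})`. If `x > 1` the
factor `e^{-κ n}` beats `C(n,k) A₃^k ≤ e^{κ n / 2}`, which holds for `k ≤ a₄ n` with `a₄` small.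
Summing, the total is at most `2 r + n e^{-κ n / 2} ≤ 2 n^{-ε}`.
-/

lemma mul_min_le_one_sub_exp_neg {x : ℝ} (hx : 0 ≤ x) :
    (1 - exp (-1)) * min x 1 ≤ 1 - exp (-x) := by
  rcases le_total x 1 with hx1 | hx1
  · -- convexity of `exp` on `[-1, 0]`
    have h := convexOn_exp.2 (Set.mem_univ (-1 : ℝ)) (Set.mem_univ 0) hx (by linarith)
      (add_sub_cancel x 1)
    simp only [smul_eq_mul, mul_neg, mul_one, mul_zero, add_zero, exp_zero] at h
    rw [min_eq_left hx1]
    linarith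
  · rw [min_eq_right hx1, mul_one]
    linarith [exp_le_exp.2 (neg_le_neg hx1)]

lemma affine_exp_neg_pow_le {a κ x : ℝ} (ha0 : 0 ≤ a) (ha1 : a ≤ 1)
    (hκ : κ ≤ (1 - a) * (1 - exp (-1))) (hx : 0 ≤ x) (n : ℕ) :
    (a + (1 - a) * exp (-x)) ^ n ≤ exp (-(κ * min x 1)) ^ n := by
  refine pow_le_pow_left₀ (by positivity) ?_ n
  calc a + (1 - a) * exp (-x) ≤ exp (-((1 - a) * (1 - exp (-x)))) := by
        linarith [add_one_le_exp (-((1 - a) * (1 - exp (-x))))]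
    _ ≤ exp (-(κ * min x 1)) := by
        have hmin : 0 ≤ min x 1 := le_min hx zero_le_one
        have := mul_le_mul_of_nonneg_left (mul_min_le_one_sub_exp_neg hx) (sub_nonneg.2 ha1)
        exact exp_le_exp.2 (by nlinarith)

lemma choose_mul_pow_le_one_add_pow {y : ℝ} (hy : 0 ≤ y) {n k : ℕ} (hk : k ≤ n) :
    (n.choose k : ℝ) * y ^ k ≤ (1 + y) ^ n := by
  rw [add_comm, add_pow]
  refine le_trans (le_of_eq ?_) (single_le_sum (f := fun j => y ^ j * 1 ^ (n - j) * n.choose j)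
    (fun j _ => by positivity) (mem_range.2 (Nat.lt_succ_of_le hk)))
  simp only [one_pow, mul_one, mul_comm]

lemma exists_choose_mul_pow_le_exp {A η : ℝ} (hA : 0 ≤ A) (hη : 0 < η) :
    ∃ a₀ > 0, ∀ n k : ℕ, (k : ℝ) ≤ a₀ * n → (n.choose k : ℝ) * A ^ k ≤ exp (η * n) := by
  -- `A ≤ y * M` with `1 + y = exp (η / 2)`; the factor `y ^ k` is absorbed by the binomial
  -- theorem and `M ^ k` by the smallness of `k / n`
  set y := exp (η / 2) - 1
  have hy : 0 < y := by linarith [add_one_lt_exp (half_pos hη).ne']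
  set M := max 1 (A / y)
  have hM : 0 < M := zero_lt_one.trans_le (le_max_left _ _)
  have hlogM : 0 ≤ log M := log_nonneg (le_max_left _ _)
  refine ⟨η / (2 * (log M + 1)), by positivity, fun n k hk => ?_⟩
  rcases lt_or_ge n k with hnk | hkn
  · rw [Nat.choose_eq_zero_of_lt hnk, Nat.cast_zero, zero_mul]
    exact (exp_pos _).le
  have hbin : (n.choose k : ℝ) * y ^ k ≤ exp (η / 2 * n) := by
    calc (n.choose k : ℝ) * y ^ k ≤ (1 + y) ^ n := choose_mul_pow_le_one_add_pow hy.le hkn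
      _ = exp (η / 2 * n) := by rw [add_sub_cancel, mul_comm, exp_nat_mul]
  have hMk : M ^ k ≤ exp (η / 2 * n) := by
    have ha₀ : η / (2 * (log M + 1)) * log M ≤ η / 2 := by
      rw [div_mul_eq_mul_div, div_le_div_iff₀ (by positivity) two_pos]
      nlinarith
    rw [← exp_log hM, ← exp_nat_mul]
    refine exp_le_exp.2 ?_
    calc (k : ℝ) * log M ≤ η / (2 * (log M + 1)) * n * log M := by gcongr
      _ ≤ η / 2 * n := by nlinarith [(Nat.cast_nonneg n : (0 : ℝ) ≤ n)]
  calc (n.choose k : ℝ) * A ^ k ≤ (n.choose k : ℝ) * y ^ k * M ^ k := by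
        rw [mul_assoc, ← mul_pow]
        gcongr
        calc A = y * (A / y) := by field_simp
          _ ≤ y * M := by gcongr; exact le_max_right _ _
    _ ≤ exp (η / 2 * n) * exp (η / 2 * n) := by gcongr
    _ = exp (η * n) := by rw [← exp_add]; ring_nf

lemma choose_mul_pow_mul_affine_exp_neg_pow_le {A a κ c : ℝ} (hA : 0 ≤ A) (ha0 : 0 ≤ a)
    (ha1 : a ≤ 1) (hκ : κ ≤ (1 - a) * (1 - exp (-1))) (hc : 0 ≤ c) {n k : ℕ}
    (hbin : (n.choose k : ℝ) * A ^ k ≤ exp (κ / 2 * n)) :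
    (n.choose k : ℝ) * A ^ k * (a + (1 - a) * exp (-(c * k))) ^ n ≤
      (n * A * exp (-(κ * c * n))) ^ k + exp (-(κ / 2 * n)) := by
  have hck : 0 ≤ c * k := by positivity
  have hpow := affine_exp_neg_pow_le ha0 ha1 hκ hck n
  rcases le_total (c * k) 1 with hck1 | hck1
  · rw [min_eq_left hck1] at hpow
    refine le_add_of_le_of_nonneg ?_ (exp_pos _).le
    calc (n.choose k : ℝ) * A ^ k * (a + (1 - a) * exp (-(c * k))) ^ n
        ≤ (n : ℝ) ^ k * A ^ k * exp (-(κ * (c * k))) ^ n := by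
          gcongr
          exact_mod_cast Nat.choose_le_pow n k
      _ = (n * A * exp (-(κ * c * n))) ^ k := by
          rw [← exp_nat_mul, mul_pow, mul_pow, ← exp_nat_mul]
          ring_nf
  · rw [min_eq_right hck1, mul_one, ← exp_nat_mul] at hpow
    refine le_add_of_nonneg_of_le (by positivity) ?_
    calc (n.choose k : ℝ) * A ^ k * (a + (1 - a) * exp (-(c * k))) ^ n
        ≤ exp (κ / 2 * n) * exp (n * -κ) := by gcongr
      _ = exp (-(κ / 2 * n)) := by rw [← exp_add]; ring_nf

lemma choose_mul_pow_mul_affine_exp_log_pow_le {A a κ Δ : ℝ} (hA : 0 ≤ A) (ha0 : 0 ≤ a)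
    (ha1 : a ≤ 1) (hκ : κ ≤ (1 - a) * (1 - exp (-1))) (hΔ : 0 ≤ Δ) {n k : ℕ} (hn : 1 ≤ n)
    (hbin : (n.choose k : ℝ) * A ^ k ≤ exp (κ / 2 * n)) :
    (n.choose k : ℝ) * A ^ k * (a + (1 - a) * exp (-(Δ * log n / n) * k)) ^ n ≤
      (A * (n : ℝ) ^ (1 - κ * Δ)) ^ k + exp (-(κ / 2 * n)) := by
  have hn0 : (0 : ℝ) < n := by exact_mod_cast hn
  have hc : 0 ≤ Δ * log n / n := by
    have := log_nonneg (Nat.one_le_cast.2 hn); positivity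
  have hr : (n : ℝ) * A * exp (-(κ * (Δ * log n / n) * n)) = A * (n : ℝ) ^ (1 - κ * Δ) := by
    rw [show -(κ * (Δ * log n / n) * n) = log n * -(κ * Δ) by field_simp,
      ← rpow_def_of_pos hn0, sub_eq_add_neg, rpow_add hn0, rpow_one]
    ring
  simpa only [neg_mul, hr] using
    choose_mul_pow_mul_affine_exp_neg_pow_le hA ha0 ha1 hκ hc hbin

lemma sum_Icc_pow_add_le {r E : ℝ} (hr0 : 0 ≤ r) (hr : r ≤ 1 / 2) (hE : 0 ≤ E) {m n : ℕ}
    (hmn : m ≤ n) : ∑ k ∈ Icc 1 m, (r ^ k + E) ≤ 2 * r + n * E := by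
  have hgeom : ∑ k ∈ Icc 1 m, r ^ k ≤ 2 * r := by
    rw [← Ico_add_one_right_eq_Icc]
    refine (geom_sum_Ico_le_of_lt_one hr0 (by linarith)).trans ?_
    rw [pow_one, div_le_iff₀ (by linarith)]
    nlinarith
  rw [sum_add_distrib, sum_const, Nat.card_Icc, add_tsub_cancel_right, nsmul_eq_mul]
  gcongr

lemma eventually_mul_rpow_le_rpow (A : ℝ) {p q : ℝ} (hpq : p < q) :
    ∀ᶠ n : ℕ in atTop, A * (n : ℝ) ^ p ≤ (n : ℝ) ^ q := by
  filter_upwards [((tendsto_rpow_atTop (sub_pos.2 hpq)).comp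
    tendsto_natCast_atTop_atTop).eventually_ge_atTop A, eventually_gt_atTop 0] with n hA hn
  calc A * (n : ℝ) ^ p ≤ (n : ℝ) ^ (q - p) * (n : ℝ) ^ p := by gcongr; exact hA
    _ = (n : ℝ) ^ q := by rw [← rpow_add (by exact_mod_cast hn), sub_add_cancel]

lemma eventually_mul_exp_neg_le_rpow {b : ℝ} (hb : 0 < b) (q : ℝ) :
    ∀ᶠ n : ℕ in atTop, n * exp (-(b * n)) ≤ (n : ℝ) ^ q := by
  filter_upwards [((tendsto_rpow_mul_exp_neg_mul_atTop_nhds_zero (1 - q) b hb).comp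
    tendsto_natCast_atTop_atTop).eventually_le_const zero_lt_one, eventually_gt_atTop 0]
    with n h hn
  have hn' : (0 : ℝ) < n := by exact_mod_cast hn
  calc (n : ℝ) * exp (-(b * n)) = (n : ℝ) ^ (1 - q) * exp (-b * n) * (n : ℝ) ^ q := by
        rw [mul_right_comm, ← rpow_add hn', sub_add_cancel, rpow_one, neg_mul]
    _ ≤ 1 * (n : ℝ) ^ q := by gcongr; exact h
    _ = (n : ℝ) ^ q := one_mul _

/-- For `A₃ > 0` and `0 < a₁ < 1`, for all sufficiently small `a₄ > 0`, every
`Δ' > 2/(1-a₁)`, and all sufficiently large `n`,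
`∑_{k=1}^{⌊a₄n⌋} C(n,k) A₃^k (a₁ + (1-a₁) exp(-(Δ' log n / n) k))^n ≤ 3 n^{-((1-a₁)Δ'/2 - 1)}`. -/
theorem binomial_sum_decay_bound (A₃ a₁ : ℝ) (hA₃ : 0 < A₃) (ha₁0 : 0 < a₁) (ha₁1 : a₁ < 1) :
    ∃ a₄₀ : ℝ, 0 < a₄₀ ∧ ∀ a₄ : ℝ, 0 < a₄ → a₄ ≤ a₄₀ →
      ∀ Δ' : ℝ, 2 / (1 - a₁) < Δ' → ∃ N : ℕ, ∀ n : ℕ, N ≤ n →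
        ∑ k ∈ Finset.Icc 1 ⌊a₄ * n⌋₊, (n.choose k : ℝ) * A₃ ^ k *
            (a₁ + (1 - a₁) * Real.exp (-(Δ' * Real.log n / n) * k)) ^ n
          ≤ 3 * (n : ℝ) ^ (-((1 - a₁) * Δ' / 2 - 1)) := by
  set κ := (1 - a₁) * (1 - exp (-1)) with hκdef
  have hκ : 0 < κ := mul_pos (by linarith) (by linarith [exp_neg_one_lt_half])
  obtain ⟨a₀, ha₀, hbin⟩ := exists_choose_mul_pow_le_exp hA₃.le (half_pos hκ)
  refine ⟨min a₀ 1, lt_min ha₀ one_pos, fun a₄ ha₄ ha₄le Δ' hΔ' => ?_⟩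
  set ε := (1 - a₁) * Δ' / 2 - 1 with hεdef
  have hΔ : 2 < (1 - a₁) * Δ' := by rwa [div_lt_iff₀ (by linarith), mul_comm] at hΔ'
  have hΔ0 : 0 < Δ' := (div_pos two_pos (by linarith)).trans hΔ'
  -- the room between the exponents is `(1 - a₁) Δ' (1 / 2 - exp (-1))`
  have hgap : 1 - κ * Δ' < -ε := by
    nlinarith [mul_pos (by linarith : 0 < (1 - a₁) * Δ') (sub_pos.2 exp_neg_one_lt_half)]
  obtain ⟨N, hN⟩ := eventually_atTop.1 ((eventually_mul_rpow_le_rpow (2 * A₃) hgap).and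
    ((eventually_mul_exp_neg_le_rpow (half_pos hκ) (-ε)).and (eventually_ge_atTop 1)))
  refine ⟨N, fun n hn => ?_⟩
  obtain ⟨hr, hE, hn1⟩ := hN n hn
  have hn_rpow : (n : ℝ) ^ (-ε) ≤ 1 :=
    rpow_le_one_of_one_le_of_nonpos (Nat.one_le_cast.2 hn1) (by linarith)
  have hterm : ∀ k ∈ Icc 1 ⌊a₄ * n⌋₊, (n.choose k : ℝ) * A₃ ^ k *
      (a₁ + (1 - a₁) * exp (-(Δ' * log n / n) * k)) ^ n ≤
        (A₃ * (n : ℝ) ^ (1 - κ * Δ')) ^ k + exp (-(κ / 2 * n)) := by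
    intro k hk
    have hka : (k : ℝ) ≤ a₀ * n := calc
      (k : ℝ) ≤ a₄ * n := (Nat.le_floor_iff (by positivity)).1 (mem_Icc.1 hk).2
      _ ≤ a₀ * n := by gcongr; exact ha₄le.trans (min_le_left _ _)
    exact choose_mul_pow_mul_affine_exp_log_pow_le hA₃.le ha₁0.le ha₁1.le hκdef.le hΔ0.le hn1
      (hbin n k hka)
  calc _ ≤ ∑ k ∈ Icc 1 ⌊a₄ * n⌋₊, ((A₃ * (n : ℝ) ^ (1 - κ * Δ')) ^ k + exp (-(κ / 2 * n))) :=
        sum_le_sum hterm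
    _ ≤ 2 * (A₃ * (n : ℝ) ^ (1 - κ * Δ')) + n * exp (-(κ / 2 * n)) :=
        sum_Icc_pow_add_le (by positivity) (by linarith) (exp_pos _).le
          (Nat.floor_le_of_le (by nlinarith [min_le_right a₀ 1]))
    _ ≤ 3 * (n : ℝ) ^ (-ε) := by linarith [rpow_nonneg (Nat.cast_nonneg n) (-ε)]
end
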